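/- arXiv:1602.04015 — 9 statements merged into one kernel-verified Lean document; each statement's English description precedes it below -/
import Mathlib

section
/- For T a closed densely-defined operator from H to K, the operator I + T*T is a bijection from the domain of T*T onto H, and its inverse is a positive bounded self-adjoint operator B satisfying 0 ≤ B ≤ I. -/
/-!
Decomposing `(y, 0)` orthogonally along the closed graph of `T` in `H × K` gives
`(y, 0) = (x, T x) + (-T* k, k)` with `k ∈ D(T*)`; hence `T x = -k ∈ D(T*)` and
`y = x + T* T x`, so `I + T*T` is onto. The identity `⟪(I + T*T) x, z⟫ = ⟪x, z⟫ + ⟪T x, T z⟫`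
makes it injective with `‖x‖ ≤ ‖(I + T*T) x‖`, so its inverse `B` is a contraction, and the same
identity shows `B` is positive. A positive contraction lies below `1`.
-/

open LinearPMap
open scoped InnerProductSpace

namespace LinearPMap

variable {𝕜 E F : Type*} [RCLike 𝕜] [NormedAddCommGroup E] [InnerProductSpace 𝕜 E]
  [NormedAddCommGroup F] [InnerProductSpace 𝕜 F] [CompleteSpace E] {T : E →ₗ.[𝕜] F}

theorem exists_eq_graph_add_adjoint_graph [CompleteSpace F] (hT : Dense (T.domain : Set E))
    (hcl : T.IsClosed) (z : E × F) :
    ∃ (x : T.domain) (k : T†.domain), z = ((x : E), T x) + (-T† k, (k : F)) := by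
  set G : Submodule 𝕜 (WithLp 2 (E × F)) :=
    T.graph.comap (WithLp.linearEquiv 2 𝕜 (E × F)).toLinearMap
  have : CompleteSpace G :=
    (hcl.preimage (WithLp.prod_continuous_ofLp 2 E F)).completeSpace_coe
  obtain ⟨a, ha, b, hb, hab⟩ := G.exists_add_mem_mem_orthogonal (WithLp.toLp 2 z)
  obtain ⟨x, hxa, hTxa⟩ := T.mem_graph_iff.mp ha
  have hb_graph : (b.ofLp.2, -b.ofLp.1) ∈ T†.graph := by
    rw [adjoint_graph_eq_graph_adjoint hT, Submodule.mem_adjoint_iff]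
    intro u v huv
    have h := Submodule.inner_right_of_mem_orthogonal (u := WithLp.toLp 2 (u, v)) huv hb
    rw [WithLp.prod_inner_apply] at h
    simp only [inner_neg_right, sub_neg_eq_add]
    linear_combination h
  obtain ⟨k, hkb, hTkb⟩ := T†.mem_graph_iff.mp hb_graph
  refine ⟨x, k, ?_⟩
  rw [hkb, hTkb, neg_neg, hxa, hTxa]
  exact congrArg WithLp.ofLp hab

variable (T) in
noncomputable def adjointCompSelfDomain : Submodule 𝕜 T.domain := T†.domain.comap T.toFun

variable (T) in
noncomputable def oneAddAdjointCompSelf : T.adjointCompSelfDomain →ₗ[𝕜] E :=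
  T.domain.subtype ∘ₗ T.adjointCompSelfDomain.subtype +
    T†.toFun ∘ₗ T.toFun.restrict (p := T.adjointCompSelfDomain) (q := T†.domain) fun _ hx ↦ hx

theorem oneAddAdjointCompSelf_apply (x : T.adjointCompSelfDomain) :
    T.oneAddAdjointCompSelf x = (x : E) + T† ⟨T x, x.2⟩ :=
  rfl

theorem inner_oneAddAdjointCompSelf_left (hT : Dense (T.domain : Set E))
    (x y : T.adjointCompSelfDomain) :
    ⟪T.oneAddAdjointCompSelf x, y⟫_𝕜 = ⟪(x : E), y⟫_𝕜 + ⟪T x, T y⟫_𝕜 := by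
  rw [oneAddAdjointCompSelf_apply, inner_add_left, adjoint_isFormalAdjoint hT]

theorem inner_oneAddAdjointCompSelf_right (hT : Dense (T.domain : Set E))
    (x y : T.adjointCompSelfDomain) :
    ⟪(x : E), T.oneAddAdjointCompSelf y⟫_𝕜 = ⟪(x : E), y⟫_𝕜 + ⟪T x, T y⟫_𝕜 := by
  rw [← inner_conj_symm, inner_oneAddAdjointCompSelf_left hT]
  simp only [_root_.map_add, inner_conj_symm]

theorem re_inner_oneAddAdjointCompSelf_self (hT : Dense (T.domain : Set E))
    (x : T.adjointCompSelfDomain) :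
    RCLike.re ⟪T.oneAddAdjointCompSelf x, x⟫_𝕜 = ‖(x : E)‖ ^ 2 + ‖T x‖ ^ 2 := by
  simp only [inner_oneAddAdjointCompSelf_left hT, _root_.map_add, inner_self_eq_norm_sq]

theorem norm_le_norm_oneAddAdjointCompSelf (hT : Dense (T.domain : Set E))
    (x : T.adjointCompSelfDomain) : ‖(x : E)‖ ≤ ‖T.oneAddAdjointCompSelf x‖ := by
  have h : ‖(x : E)‖ ^ 2 ≤ ‖T.oneAddAdjointCompSelf x‖ * ‖(x : E)‖ :=
    calc ‖(x : E)‖ ^ 2 ≤ RCLike.re ⟪T.oneAddAdjointCompSelf x, x⟫_𝕜 := by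
          rw [re_inner_oneAddAdjointCompSelf_self hT]; nlinarith [sq_nonneg ‖T x‖]
      _ ≤ ‖T.oneAddAdjointCompSelf x‖ * ‖(x : E)‖ := re_inner_le_norm ..
  nlinarith [norm_nonneg (x : E), norm_nonneg (T.oneAddAdjointCompSelf x)]

theorem oneAddAdjointCompSelf_injective (hT : Dense (T.domain : Set E)) :
    Function.Injective T.oneAddAdjointCompSelf := by
  refine (injective_iff_map_eq_zero _).mpr fun x hx ↦ ?_
  have h := norm_le_norm_oneAddAdjointCompSelf hT x
  rw [hx, norm_zero, norm_le_zero_iff] at h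
  exact Subtype.ext (Subtype.ext h)

theorem oneAddAdjointCompSelf_surjective [CompleteSpace F] (hT : Dense (T.domain : Set E))
    (hcl : T.IsClosed) : Function.Surjective T.oneAddAdjointCompSelf := by
  intro y
  obtain ⟨x, k, hxk⟩ := exists_eq_graph_add_adjoint_graph hT hcl (y, 0)
  simp only [Prod.mk_add_mk, Prod.mk.injEq] at hxk
  obtain ⟨hy, h0⟩ := hxk
  have hTx : T x = -k := eq_neg_of_add_eq_zero_left h0.symm
  have hx : T x ∈ T†.domain := hTx ▸ neg_mem k.2
  refine ⟨⟨x, hx⟩, ?_⟩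
  have hk : (⟨T x, hx⟩ : T†.domain) = -k := Subtype.ext hTx
  rw [oneAddAdjointCompSelf_apply, hk, map_neg]
  exact hy.symm

variable [CompleteSpace F]

variable (T) in
noncomputable def oneAddAdjointCompSelfEquiv (hT : Dense (T.domain : Set E)) (hcl : T.IsClosed) :
    T.adjointCompSelfDomain ≃ₗ[𝕜] E :=
  .ofBijective T.oneAddAdjointCompSelf
    ⟨oneAddAdjointCompSelf_injective hT, oneAddAdjointCompSelf_surjective hT hcl⟩

theorem oneAddAdjointCompSelfEquiv_apply (hT : Dense (T.domain : Set E)) (hcl : T.IsClosed)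
    (x : T.adjointCompSelfDomain) :
    T.oneAddAdjointCompSelfEquiv hT hcl x = T.oneAddAdjointCompSelf x :=
  rfl

variable (T) in
noncomputable def oneAddAdjointCompSelfInv (hT : Dense (T.domain : Set E)) (hcl : T.IsClosed) :
    E →L[𝕜] E :=
  LinearMap.mkContinuous (T.domain.subtype ∘ₗ T.adjointCompSelfDomain.subtype ∘ₗ
      (T.oneAddAdjointCompSelfEquiv hT hcl).symm.toLinearMap) 1 fun y ↦ by
    have h := norm_le_norm_oneAddAdjointCompSelf hT ((T.oneAddAdjointCompSelfEquiv hT hcl).symm y)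
    rw [← oneAddAdjointCompSelfEquiv_apply hT hcl, LinearEquiv.apply_symm_apply] at h
    rw [one_mul]
    exact h

theorem oneAddAdjointCompSelfInv_apply (hT : Dense (T.domain : Set E)) (hcl : T.IsClosed)
    (x : T.adjointCompSelfDomain) :
    T.oneAddAdjointCompSelfInv hT hcl (T.oneAddAdjointCompSelf x) = x := by
  rw [← oneAddAdjointCompSelfEquiv_apply hT hcl]
  simp [oneAddAdjointCompSelfInv]

theorem norm_oneAddAdjointCompSelfInv_le (hT : Dense (T.domain : Set E)) (hcl : T.IsClosed) :
    ‖T.oneAddAdjointCompSelfInv hT hcl‖ ≤ 1 :=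
  LinearMap.mkContinuous_norm_le _ zero_le_one _

theorem isPositive_oneAddAdjointCompSelfInv (hT : Dense (T.domain : Set E)) (hcl : T.IsClosed) :
    (T.oneAddAdjointCompSelfInv hT hcl).IsPositive := by
  have hsurj := oneAddAdjointCompSelf_surjective hT hcl
  refine ⟨fun y z ↦ ?_, fun y ↦ ?_⟩
  · obtain ⟨x, rfl⟩ := hsurj y
    obtain ⟨x', rfl⟩ := hsurj z
    simp only [ContinuousLinearMap.coe_coe, oneAddAdjointCompSelfInv_apply]
    rw [inner_oneAddAdjointCompSelf_right hT, inner_oneAddAdjointCompSelf_left hT]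
  · obtain ⟨x, rfl⟩ := hsurj y
    rw [ContinuousLinearMap.reApplyInnerSelf, oneAddAdjointCompSelfInv_apply, inner_re_symm,
      re_inner_oneAddAdjointCompSelf_self hT]
    positivity

end LinearPMap

/-- For a closed densely-defined operator `T : H → K` between complex
Hilbert spaces, `I + T*T` is a bijection from the domain of `T*T`
(namely `{x ∈ D(T) : Tx ∈ D(T*)}`) onto `H`, and it has a positive bounded self-adjoint
inverse `B` with `0 ≤ B ≤ I`. -/
theorem one_add_adjoint_comp_self_bijective_of_closed_dense
    {H K : Type*} [NormedAddCommGroup H] [InnerProductSpace ℂ H] [CompleteSpace H]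
    [NormedAddCommGroup K] [InnerProductSpace ℂ K] [CompleteSpace K]
    (T : H →ₗ.[ℂ] K) (hdense : Dense (T.domain : Set H))
    (hclosed : IsClosed (T.graph : Set (H × K))) :
    Function.Bijective
      (fun p : {p : T.domain // T p ∈ T.adjoint.domain} =>
        (p.1 : H) + T.adjoint ⟨T p.1, p.2⟩) ∧
    ∃ B : H →L[ℂ] H, B.IsPositive ∧ IsSelfAdjoint B ∧ ((1 : H →L[ℂ] H) - B).IsPositive ∧
      (∀ p : {p : T.domain // T p ∈ T.adjoint.domain},
        B ((p.1 : H) + T.adjoint ⟨T p.1, p.2⟩) = (p.1 : H)) ∧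
      (∀ y : H, ∃ p : {p : T.domain // T p ∈ T.adjoint.domain},
        (p.1 : H) + T.adjoint ⟨T p.1, p.2⟩ = y) := by
  have hsurj := oneAddAdjointCompSelf_surjective hdense hclosed
  have hpos := isPositive_oneAddAdjointCompSelfInv hdense hclosed
  have hle_one : T.oneAddAdjointCompSelfInv hdense hclosed ≤ 1 :=
    (CStarAlgebra.norm_le_one_iff_of_nonneg _
      ((ContinuousLinearMap.nonneg_iff_isPositive _).mpr hpos)).mp
      (norm_oneAddAdjointCompSelfInv_le hdense hclosed)
  exact ⟨⟨oneAddAdjointCompSelf_injective hdense, hsurj⟩,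
    T.oneAddAdjointCompSelfInv hdense hclosed, hpos, hpos.isSelfAdjoint, hle_one,
    oneAddAdjointCompSelfInv_apply hdense hclosed, hsurj⟩
end

section
/- For T a closed densely-defined operator from H to K, the operator T(I + T*T)^{-1/2} extends to a bounded operator defined on all of H with norm at most 1. -/
/-!
If `p = B z` then `p + T†T p = z`, so `‖T p‖² ≤ re ⟪p, z⟫ = ‖R z‖²`: the operator `T R` is a
contraction on `range R`, and trivially on `ker R`, whose sum is dense because `R` is self-adjoint.
Since `T` is closed and `R` bounded, `T R` is closed, and a closed operator that is contractive on
a dense subspace of its domain is the restriction of an everywhere defined contraction.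
-/

open scoped InnerProductSpace

namespace LinearPMap

section Closed

variable {𝕜 E F G : Type*} [NontriviallyNormedField 𝕜]
  [NormedAddCommGroup E] [NormedSpace 𝕜 E] [NormedAddCommGroup F] [NormedSpace 𝕜 F]
  [NormedAddCommGroup G] [NormedSpace 𝕜 G]

def compLinearMap (T : F →ₗ.[𝕜] G) (A : E →ₗ[𝕜] F) : E →ₗ.[𝕜] G where
  domain := T.domain.comap A
  toFun := T.toFun ∘ₗ A.restrict fun _ hx ↦ hx

theorem compLinearMap_apply (T : F →ₗ.[𝕜] G) (A : E →ₗ[𝕜] F) (x : (T.compLinearMap A).domain) :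
    T.compLinearMap A x = T ⟨A x, x.2⟩ :=
  rfl

theorem mem_graph_compLinearMap_iff (T : F →ₗ.[𝕜] G) (A : E →ₗ[𝕜] F) {x : E} {y : G} :
    (x, y) ∈ (T.compLinearMap A).graph ↔ (A x, y) ∈ T.graph := by
  simp only [mem_graph_iff, Subtype.exists]
  constructor
  · rintro ⟨x', hx', rfl, rfl⟩
    exact ⟨A x', hx', rfl, rfl⟩
  · rintro ⟨y', hy', hxy, rfl⟩
    exact ⟨x, show A x ∈ T.domain from hxy ▸ hy', rfl, by simp only [compLinearMap_apply, hxy]⟩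

theorem IsClosed.compContinuousLinearMap {T : F →ₗ.[𝕜] G} (hT : T.IsClosed) (A : E →L[𝕜] F) :
    (T.compLinearMap (A : E →ₗ[𝕜] F)).IsClosed := by
  have hgraph : ((T.compLinearMap (A : E →ₗ[𝕜] F)).graph : Set (E × G)) =
      (fun p : E × G ↦ (A p.1, p.2)) ⁻¹' T.graph := by
    ext ⟨x, y⟩
    exact mem_graph_compLinearMap_iff T (A : E →ₗ[𝕜] F)
  rw [LinearPMap.IsClosed, hgraph]
  exact hT.preimage (by fun_prop)

theorem IsClosed.exists_continuousLinearMap_eq [CompleteSpace G] {S : E →ₗ.[𝕜] G}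
    (hS : S.IsClosed) {D : Submodule 𝕜 E} (hDS : D ≤ S.domain) (hD : Dense (D : Set E))
    {c : ℝ} (hc : 0 ≤ c) (hbound : ∀ x : D, ‖S (Submodule.inclusion hDS x)‖ ≤ c * ‖(x : E)‖) :
    ∃ C : E →L[𝕜] G, ‖C‖ ≤ c ∧ ∀ x : S.domain, C x = S x := by
  have hDrange : DenseRange D.subtype := by simpa [DenseRange] using hD
  set C := (S.toFun ∘ₗ Submodule.inclusion hDS).extendOfNorm D.subtype
  have hCD : ∀ x : D, C x = S (Submodule.inclusion hDS x) :=
    LinearMap.extendOfNorm_eq hDrange ⟨c, hbound⟩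
  have hgraph : ∀ x : E, (x, C x) ∈ S.graph := by
    refine hD.induction (fun x hx ↦ ?_) (hS.preimage (by fun_prop))
    rw [hCD ⟨x, hx⟩]
    exact S.mem_graph (Submodule.inclusion hDS ⟨x, hx⟩)
  exact ⟨C, LinearMap.opNorm_extendOfNorm_le hDrange hc hbound,
    fun x ↦ S.mem_graph_snd_inj (hgraph x) (S.mem_graph x) rfl⟩

end Closed

end LinearPMap

section Hilbert

variable {𝕜 E F : Type*} [RCLike 𝕜] [NormedAddCommGroup E] [InnerProductSpace 𝕜 E]
  [CompleteSpace E] [NormedAddCommGroup F] [InnerProductSpace 𝕜 F]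

open RCLike

namespace IsSelfAdjoint

variable {R : E →L[𝕜] E} (hR : IsSelfAdjoint R)
include hR

theorem re_inner_apply_apply_self (z : E) : re ⟪R (R z), z⟫_𝕜 = ‖R z‖ ^ 2 := by
  rw [show ⟪R (R z), z⟫_𝕜 = ⟪R z, R z⟫_𝕜 from hR.isSymmetric (R z) z, inner_self_eq_norm_sq]

theorem norm_apply_le_norm_apply_add {k : E} (hk : R k = 0) (z : E) : ‖R z‖ ≤ ‖R z + k‖ := by
  have horth : ⟪R z, k⟫_𝕜 = 0 := by
    rw [show ⟪R z, k⟫_𝕜 = ⟪z, R k⟫_𝕜 from hR.isSymmetric z k, hk, inner_zero_right]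
  rw [mul_self_le_mul_self_iff (norm_nonneg _) (norm_nonneg _),
    norm_add_sq_eq_norm_sq_add_norm_sq_of_inner_eq_zero _ _ horth]
  exact le_add_of_nonneg_right (mul_self_nonneg _)

theorem dense_range_sup_ker :
    Dense ((R.range ⊔ R.ker : Submodule 𝕜 E) : Set E) := by
  rw [Submodule.dense_iff_topologicalClosure_eq_top, Submodule.topologicalClosure_eq_top_iff,
    ← Submodule.inf_orthogonal]
  rw [show R.rangeᗮ = R.ker by
    simpa only [hR.adjoint_eq] using R.orthogonal_range]
  exact Submodule.inf_orthogonal_eq_bot _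

end IsSelfAdjoint

namespace LinearPMap

theorem re_inner_add_adjoint_apply_self {T : E →ₗ.[𝕜] F} (hT : Dense (T.domain : Set E))
    (p : T.domain) (hp : T p ∈ T.adjoint.domain) :
    re ⟪(p : E), p + T.adjoint ⟨T p, hp⟩⟫_𝕜 = ‖(p : E)‖ ^ 2 + ‖T p‖ ^ 2 := by
  rw [inner_add_right, AddMonoidHom.map_add, inner_re_symm (p : E) (T.adjoint _),
    adjoint_isFormalAdjoint hT ⟨T p, hp⟩ p, inner_self_eq_norm_sq, inner_self_eq_norm_sq]

/-- `B = (1 + T†T)⁻¹`, with `1 + T†T` on its natural domain `{p ∈ dom T | T p ∈ dom T†}`. -/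
structure IsInvOneAddAdjointCompSelf (T : E →ₗ.[𝕜] F) (B : E →L[𝕜] E) : Prop where
  apply_add_adjoint : ∀ p : {p : T.domain // T p ∈ T.adjoint.domain},
    B ((p.1 : E) + T.adjoint ⟨T p.1, p.2⟩) = (p.1 : E)
  exists_add_adjoint_eq : ∀ y : E, ∃ p : {p : T.domain // T p ∈ T.adjoint.domain},
    (p.1 : E) + T.adjoint ⟨T p.1, p.2⟩ = y

namespace IsInvOneAddAdjointCompSelf

variable {T : E →ₗ.[𝕜] F} {B : E →L[𝕜] E} (hB : T.IsInvOneAddAdjointCompSelf B)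
include hB

theorem exists_eq_apply (z : E) : ∃ p : {p : T.domain // T p ∈ T.adjoint.domain},
    (p.1 : E) = B z ∧ (p.1 : E) + T.adjoint ⟨T p.1, p.2⟩ = z := by
  obtain ⟨p, hp⟩ := hB.exists_add_adjoint_eq z
  exact ⟨p, by rw [← hp, hB.apply_add_adjoint], hp⟩

theorem apply_mem_domain (z : E) : B z ∈ T.domain := by
  obtain ⟨p, hpB, -⟩ := hB.exists_eq_apply z
  exact hpB ▸ p.1.2

theorem norm_apply_sq_le_re_inner (hT : Dense (T.domain : Set E)) (z : E) (hz : B z ∈ T.domain) :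
    ‖T ⟨B z, hz⟩‖ ^ 2 ≤ re ⟪B z, z⟫_𝕜 := by
  obtain ⟨p, hpB, hpz⟩ := hB.exists_eq_apply z
  have hTp : T ⟨B z, hz⟩ = T p.1 := congrArg T (Subtype.ext hpB.symm)
  rw [hTp, ← hpB, ← hpz, re_inner_add_adjoint_apply_self hT]
  exact le_add_of_nonneg_left (sq_nonneg _)

variable {R : E →L[𝕜] E} (hRR : R * R = B)
include hRR

theorem range_sup_ker_le_domain_compLinearMap :
    R.range ⊔ R.ker ≤ (T.compLinearMap (R : E →ₗ[𝕜] E)).domain := by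
  refine sup_le ?_ fun k hk ↦ ?_
  · rintro _ ⟨z, rfl⟩
    show R (R z) ∈ T.domain
    exact (DFunLike.congr_fun hRR z).symm ▸ hB.apply_mem_domain z
  · show R k ∈ T.domain
    rw [show R k = 0 from hk]
    exact T.domain.zero_mem

theorem norm_apply_sqrt_apply_le (hR : IsSelfAdjoint R) (hT : Dense (T.domain : Set E)) {x : E}
    (hx : x ∈ R.range ⊔ R.ker) (hRx : R x ∈ T.domain) :
    ‖T ⟨R x, hRx⟩‖ ≤ ‖x‖ := by
  obtain ⟨_, ⟨z, rfl⟩, k, hk, rfl⟩ := Submodule.mem_sup.1 hx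
  replace hk : R k = 0 := hk
  change ‖T ⟨R (R z + k), hRx⟩‖ ≤ ‖R z + k‖
  have hRRz : R (R z) = B z := DFunLike.congr_fun hRR z
  have hRx' : R (R z + k) = B z := by rw [R.map_add, hk, add_zero, hRRz]
  have hTRx : T ⟨R (R z + k), hRx⟩ = T ⟨B z, hRx' ▸ hRx⟩ := congrArg T (Subtype.ext hRx')
  calc ‖T ⟨R (R z + k), hRx⟩‖ ≤ ‖R z‖ := by
        rw [hTRx, ← sq_le_sq₀ (norm_nonneg _) (norm_nonneg _), ← hR.re_inner_apply_apply_self,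
          hRRz]
        exact hB.norm_apply_sq_le_re_inner hT z _
    _ ≤ ‖R z + k‖ := hR.norm_apply_le_norm_apply_add hk z

end IsInvOneAddAdjointCompSelf

end LinearPMap

end Hilbert

theorem comp_inv_sqrt_one_add_adjoint_comp_self_bounded_general
    {H K : Type*} [NormedAddCommGroup H] [InnerProductSpace ℂ H] [CompleteSpace H]
    [NormedAddCommGroup K] [InnerProductSpace ℂ K] [CompleteSpace K]
    (T : H →ₗ.[ℂ] K) (hdense : Dense (T.domain : Set H)) (hclosed : T.IsClosed)
    (B R : H →L[ℂ] H)
    (hBinv₁ : ∀ p : {p : T.domain // T p ∈ T.adjoint.domain},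
      B ((p.1 : H) + T.adjoint ⟨T p.1, p.2⟩) = (p.1 : H))
    (hBinv₂ : ∀ y : H, ∃ p : {p : T.domain // T p ∈ T.adjoint.domain},
      (p.1 : H) + T.adjoint ⟨T p.1, p.2⟩ = y)
    (hR : R.IsPositive) (hRsq : R * R = B) :
    ∃ C : H →L[ℂ] K, ‖C‖ ≤ 1 ∧
      ∀ x : H, ∀ hx : R x ∈ T.domain, C x = T ⟨R x, hx⟩ := by
  have hB : T.IsInvOneAddAdjointCompSelf B := ⟨hBinv₁, hBinv₂⟩
  have hRsa : IsSelfAdjoint R := hR.isSelfAdjoint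
  obtain ⟨C, hC, hCT⟩ := (hclosed.compContinuousLinearMap R).exists_continuousLinearMap_eq
    (hB.range_sup_ker_le_domain_compLinearMap hRsq) hRsa.dense_range_sup_ker zero_le_one
    fun x ↦ by
      rw [one_mul]
      exact hB.norm_apply_sqrt_apply_le hRsq hRsa hdense x.2 _
  exact ⟨C, hC, fun x hx ↦ hCT ⟨x, hx⟩⟩

/-- Let `T : H → K` be closed and densely defined, let `B` be the (positive,
bounded) inverse of `I + T*T` and let `R` be its positive square root, so that
`R = (I + T*T)^{-1/2}`.  Then `T ∘ R = T(I + T*T)^{-1/2}` extends to a bounded operator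
`C` defined on all of `H` with `‖C‖ ≤ 1`. -/
theorem comp_inv_sqrt_one_add_adjoint_comp_self_bounded
    {H K : Type*} [NormedAddCommGroup H] [InnerProductSpace ℂ H] [CompleteSpace H]
    [NormedAddCommGroup K] [InnerProductSpace ℂ K] [CompleteSpace K]
    (T : H →ₗ.[ℂ] K) (hdense : Dense (T.domain : Set H)) (hclosed : T.IsClosed)
    (B R : H →L[ℂ] H) (hB : B.IsPositive)
    (hBinv₁ : ∀ p : {p : T.domain // T p ∈ T.adjoint.domain},
      B ((p.1 : H) + T.adjoint ⟨T p.1, p.2⟩) = (p.1 : H))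
    (hBinv₂ : ∀ y : H, ∃ p : {p : T.domain // T p ∈ T.adjoint.domain},
      (p.1 : H) + T.adjoint ⟨T p.1, p.2⟩ = y)
    (hR : R.IsPositive) (hRsq : R * R = B) :
    ∃ C : H →L[ℂ] K, ‖C‖ ≤ 1 ∧
      ∀ x : H, ∀ hx : R x ∈ T.domain, C x = T ⟨R x, hx⟩ :=
  comp_inv_sqrt_one_add_adjoint_comp_self_bounded_general T hdense hclosed B R hBinv₁ hBinv₂ hR hRsq
end

section
/- If K is a finite-dimensional Hilbert space and T is a closed densely-defined operator from H to K, then ‖T(I + T*T)^{-1/2}‖² = ‖TT*‖/(1 + ‖TT*‖), which is strictly less than 1. -/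
/-!
Since `T*` is everywhere defined on the finite-dimensional space `K`, it is bounded, so `T` is
the restriction of the bounded operator `A = T**` and everything reduces to bounded operators:
`B = (1 + A*A)⁻¹`, and `C C* = A B A* = D` with `(1 + W) D = W = D (1 + W)` for `W = A A*`.
Writing `y = z + W z`, the estimates `‖W z‖² ≤ ‖W‖ re⟪W z, z⟫` and `‖W z‖ ≤ ‖W‖ ‖z‖` give
`(1 + ‖W‖) ‖D y‖ ≤ ‖W‖ ‖y‖`, while `W = (1 + W) D` gives the reverse bound, so
`‖C‖² = ‖C C*‖ = ‖W‖ / (1 + ‖W‖)`.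
-/

open ContinuousLinearMap

theorem ContinuousLinearMap.div_one_add_norm_le_norm_of_one_add_comp {𝕜 F : Type*}
    [NontriviallyNormedField 𝕜] [NormedAddCommGroup F] [NormedSpace 𝕜 F] {W D : F →L[𝕜] F}
    (h : (1 + W) ∘L D = W) :
    ‖W‖ / (1 + ‖W‖) ≤ ‖D‖ := by
  rw [div_le_iff₀ (by positivity), mul_comm]
  calc ‖W‖ = ‖(1 + W) ∘L D‖ := by rw [h]
    _ ≤ ‖1 + W‖ * ‖D‖ := opNorm_comp_le _ _
    _ ≤ (1 + ‖W‖) * ‖D‖ := by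
        gcongr
        exact (norm_add_le _ _).trans (add_le_add_left (norm_id_le (𝕜 := 𝕜) (E := F)) _)

section

variable {𝕜 E F : Type*} [RCLike 𝕜]
  [NormedAddCommGroup E] [InnerProductSpace 𝕜 E] [CompleteSpace E]
  [NormedAddCommGroup F] [InnerProductSpace 𝕜 F] [CompleteSpace F]

namespace ContinuousLinearMap

theorem one_add_norm_mul_norm_apply_le (A : E →L[𝕜] F) (z : F) :
    (1 + ‖A ∘L A.adjoint‖) * ‖(A ∘L A.adjoint) z‖ ≤
      ‖A ∘L A.adjoint‖ * ‖z + (A ∘L A.adjoint) z‖ := by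
  simp only [comp_apply]
  set u := A.adjoint z
  have hW : ‖A ∘L A.adjoint‖ = ‖A‖ * ‖A‖ := by
    simpa using norm_adjoint_comp_self A.adjoint
  have hu : ‖u‖ ≤ ‖A‖ * ‖z‖ := by
    simpa [LinearIsometryEquiv.norm_map] using A.adjoint.le_opNorm z
  have hAu : ‖A u‖ ≤ ‖A‖ * ‖u‖ := A.le_opNorm u
  have hre : RCLike.re (inner 𝕜 z (A u)) = ‖u‖ ^ 2 := by
    rw [← adjoint_inner_left, inner_self_eq_norm_sq]
  have hsq : ‖z + A u‖ ^ 2 = ‖z‖ ^ 2 + 2 * ‖u‖ ^ 2 + ‖A u‖ ^ 2 := by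
    rw [norm_add_sq (𝕜 := 𝕜), hre]
  have hAu2 : ‖A u‖ ^ 2 ≤ ‖A‖ ^ 2 * ‖u‖ ^ 2 := by rw [← mul_pow]; gcongr
  have hu2 : ‖u‖ ^ 2 ≤ ‖A‖ ^ 2 * ‖z‖ ^ 2 := by rw [← mul_pow]; gcongr
  rw [hW]
  refine pow_le_pow_iff_left₀ (by positivity) (by positivity) two_ne_zero |>.mp ?_
  rw [mul_pow, mul_pow, hsq]
  linarith [mul_le_mul_of_nonneg_left hAu2 (sq_nonneg ‖A‖),
    mul_le_mul_of_nonneg_left hu2 (sq_nonneg ‖A‖)]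

theorem norm_le_div_one_add_norm_of_comp_one_add (A : E →L[𝕜] F) {D : F →L[𝕜] F}
    (h₁ : D ∘L (1 + A ∘L A.adjoint) = A ∘L A.adjoint)
    (h₂ : (1 + A ∘L A.adjoint) ∘L D = A ∘L A.adjoint) :
    ‖D‖ ≤ ‖A ∘L A.adjoint‖ / (1 + ‖A ∘L A.adjoint‖) := by
  set W := A ∘L A.adjoint
  refine opNorm_le_bound _ (by positivity) fun y => ?_
  -- `y - D y` solves `z + W z = y`, and `D` maps that solution `z` to `W z`.
  set z := y - D y
  have hz : z + W z = y := by
    have hWDy : D y + W (D y) = W y := congr($h₂ y)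
    rw [map_sub, ← hWDy, add_sub_cancel_right, sub_add_cancel]
  have hDy : D y = W z := by rw [← hz]; exact congr($h₁ z)
  rw [hDy, div_mul_eq_mul_div, le_div_iff₀ (by positivity), mul_comm, ← hz]
  exact one_add_norm_mul_norm_apply_le A z

theorem norm_comp_comp_adjoint_eq_of_inverse (A : E →L[𝕜] F) {B : E →L[𝕜] E}
    (h₁ : B ∘L (1 + A.adjoint ∘L A) = 1) (h₂ : (1 + A.adjoint ∘L A) ∘L B = 1) :
    ‖A ∘L B ∘L A.adjoint‖ = ‖A ∘L A.adjoint‖ / (1 + ‖A ∘L A.adjoint‖) := by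
  have hcomm : A.adjoint ∘L (1 + A ∘L A.adjoint) = (1 + A.adjoint ∘L A) ∘L A.adjoint := by
    ext; simp
  have hcomm' : (1 + A ∘L A.adjoint) ∘L A = A ∘L (1 + A.adjoint ∘L A) := by
    ext; simp
  refine le_antisymm (norm_le_div_one_add_norm_of_comp_one_add A ?_ ?_)
    (div_one_add_norm_le_norm_of_one_add_comp ?_)
  · rw [comp_assoc, comp_assoc, hcomm, ← comp_assoc B, h₁, one_def, id_comp]
  all_goals rw [← comp_assoc, ← comp_assoc, hcomm', comp_assoc A, h₂, one_def, comp_id]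

theorem norm_sq_comp_eq_norm_comp_comp_adjoint (A : E →L[𝕜] F) {R B : E →L[𝕜] E}
    (hR : IsSelfAdjoint R) (hRB : R * R = B) :
    ‖A ∘L R‖ ^ 2 = ‖A ∘L B ∘L A.adjoint‖ := by
  have := norm_adjoint_comp_self (A ∘L R).adjoint
  rw [adjoint_adjoint, LinearIsometryEquiv.norm_map, adjoint_comp, hR.adjoint_eq, comp_assoc,
    ← comp_assoc R, ← mul_def, hRB] at this
  rw [this, sq]

end ContinuousLinearMap

namespace LinearPMap

theorem exists_extension_of_adjoint_domain_eq_top [FiniteDimensional 𝕜 F] {T : E →ₗ.[𝕜] F}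
    (hT : Dense (T.domain : Set E)) (h : T.adjoint.domain = ⊤) :
    ∃ A : E →L[𝕜] F, (∀ x : T.domain, A x = T x) ∧
      ∀ y : T.adjoint.domain, A.adjoint y = T.adjoint y := by
  let S : F →L[𝕜] E :=
    LinearMap.toContinuousLinearMap (T.adjoint.toFun ∘ₗ (LinearEquiv.ofTop _ h).symm)
  have hS (y : T.adjoint.domain) : S y = T.adjoint y := rfl
  refine ⟨S.adjoint, fun x => ext_inner_left 𝕜 fun y => ?_,
    fun y => by rw [adjoint_adjoint, hS]⟩
  rw [adjoint_inner_right]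
  exact adjoint_isFormalAdjoint hT ⟨y, h ▸ trivial⟩ x

theorem comp_one_add_adjoint_comp_self_eq_one {T : E →ₗ.[𝕜] F}
    (hT : Dense (T.domain : Set E)) (h : T.adjoint.domain = ⊤) {A : E →L[𝕜] F} (hTA : ∀ x : T.domain, A x = T x)
    (hA : ∀ y : T.adjoint.domain, A.adjoint y = T.adjoint y) {B : E →L[𝕜] E}
    (hB₁ : ∀ p : {p : T.domain // T p ∈ T.adjoint.domain},
      B ((p.1 : E) + T.adjoint ⟨T p.1, p.2⟩) = (p.1 : E))
    (hB₂ : ∀ y : E, ∃ p : {p : T.domain // T p ∈ T.adjoint.domain},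
      (p.1 : E) + T.adjoint ⟨T p.1, p.2⟩ = y) :
    B ∘L (1 + A.adjoint ∘L A) = 1 ∧ (1 + A.adjoint ∘L A) ∘L B = 1 := by
  have hL (p : {p : T.domain // T p ∈ T.adjoint.domain}) :
      (1 + A.adjoint ∘L A) p.1 = (p.1 : E) + T.adjoint ⟨T p.1, p.2⟩ := by
    rw [← hA ⟨T p.1, p.2⟩]
    show _ = _ + A.adjoint (T p.1)
    rw [← hTA]; rfl
  have hleft : B ∘L (1 + A.adjoint ∘L A) = 1 := by
    ext1 x
    refine congrFun (Continuous.ext_on hT (B ∘L (1 + A.adjoint ∘L A)).continuous continuous_id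
      fun x hx => ?_) x
    have hp := hB₁ ⟨⟨x, hx⟩, h ▸ trivial⟩
    rwa [← hL] at hp
  have hsurj : Function.Surjective (1 + A.adjoint ∘L A : E →L[𝕜] E) := fun y =>
    let ⟨p, hp⟩ := hB₂ y
    ⟨p.1, by rw [hL, hp]⟩
  have hinv : Function.LeftInverse B (1 + A.adjoint ∘L A : E →L[𝕜] E) :=
    fun x => congr($hleft x)
  exact ⟨hleft, ContinuousLinearMap.ext (hinv.rightInverse_of_surjective hsurj)⟩

end LinearPMap

end

theorem norm_sq_comp_inv_sqrt_eq_of_finiteDimensional_general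
    {H K : Type*} [NormedAddCommGroup H] [InnerProductSpace ℂ H] [CompleteSpace H]
    [NormedAddCommGroup K] [InnerProductSpace ℂ K] [CompleteSpace K]
    [FiniteDimensional ℂ K]
    (T : H →ₗ.[ℂ] K) (hdense : Dense (T.domain : Set H))
    (B R : H →L[ℂ] H)
    (hBinv₁ : ∀ p : {p : T.domain // T p ∈ T.adjoint.domain},
      B ((p.1 : H) + T.adjoint ⟨T p.1, p.2⟩) = (p.1 : H))
    (hBinv₂ : ∀ y : H, ∃ p : {p : T.domain // T p ∈ T.adjoint.domain},
      (p.1 : H) + T.adjoint ⟨T p.1, p.2⟩ = y)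
    (hR : R.IsPositive) (hRsq : R * R = B)
    (C : H →L[ℂ] K)
    (hC : ∀ x : H, ∃ hx : R x ∈ T.domain, C x = T ⟨R x, hx⟩)
    (W : K →L[ℂ] K)
    (hWdom : ∀ y : K, ∃ hy : y ∈ T.adjoint.domain, T.adjoint ⟨y, hy⟩ ∈ T.domain)
    (hW : ∀ y : K, ∀ hy : y ∈ T.adjoint.domain, ∀ h2 : T.adjoint ⟨y, hy⟩ ∈ T.domain,
      W y = T ⟨T.adjoint ⟨y, hy⟩, h2⟩) :
    ‖C‖ ^ 2 = ‖W‖ / (1 + ‖W‖) ∧ ‖W‖ / (1 + ‖W‖) < 1 := by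
  have hdom : T.adjoint.domain = ⊤ := Submodule.eq_top_iff'.mpr fun y => (hWdom y).1
  obtain ⟨A, hTA, hA⟩ := LinearPMap.exists_extension_of_adjoint_domain_eq_top hdense hdom
  obtain ⟨hBA, hAB⟩ :=
    LinearPMap.comp_one_add_adjoint_comp_self_eq_one hdense hdom hTA hA hBinv₁ hBinv₂
  have hCA : C = A ∘L R := ext fun x => by
    obtain ⟨hx, hCx⟩ := hC x
    rw [hCx, comp_apply, hTA ⟨R x, hx⟩]
  have hWA : W = A ∘L A.adjoint := ext fun y => by
    obtain ⟨hy, hy'⟩ := hWdom y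
    rw [hW y hy hy', ← hTA, comp_apply, hA ⟨y, hy⟩]
  have hnorm : ‖C‖ ^ 2 = ‖W‖ / (1 + ‖W‖) := by
    rw [hCA, norm_sq_comp_eq_norm_comp_comp_adjoint A hR.isSelfAdjoint hRsq, hWA,
      norm_comp_comp_adjoint_eq_of_inverse A hBA hAB]
  exact ⟨hnorm, (div_lt_one (by positivity)).mpr (lt_one_add _)⟩

/-- Let `K` be finite dimensional and `T : H → K` closed and densely
defined.  Let `B = (I + T*T)^{-1}`, `R = (I + T*T)^{-1/2}` (the positive square root of
`B`), let `C = T(I + T*T)^{-1/2}` (defined on all of `H`), and let `W = TT*` (a bounded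
operator on `K`).  Then `‖C‖² = ‖W‖ / (1 + ‖W‖)`, which is strictly less than `1`. -/
theorem norm_sq_comp_inv_sqrt_eq_of_finiteDimensional
    {H K : Type*} [NormedAddCommGroup H] [InnerProductSpace ℂ H] [CompleteSpace H]
    [NormedAddCommGroup K] [InnerProductSpace ℂ K] [CompleteSpace K]
    [FiniteDimensional ℂ K]
    (T : H →ₗ.[ℂ] K) (hdense : Dense (T.domain : Set H)) (hclosed : T.IsClosed)
    (B R : H →L[ℂ] H) (hB : B.IsPositive)
    (hBinv₁ : ∀ p : {p : T.domain // T p ∈ T.adjoint.domain},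
      B ((p.1 : H) + T.adjoint ⟨T p.1, p.2⟩) = (p.1 : H))
    (hBinv₂ : ∀ y : H, ∃ p : {p : T.domain // T p ∈ T.adjoint.domain},
      (p.1 : H) + T.adjoint ⟨T p.1, p.2⟩ = y)
    (hR : R.IsPositive) (hRsq : R * R = B)
    (C : H →L[ℂ] K)
    (hC : ∀ x : H, ∃ hx : R x ∈ T.domain, C x = T ⟨R x, hx⟩)
    (W : K →L[ℂ] K)
    (hWdom : ∀ y : K, ∃ hy : y ∈ T.adjoint.domain, T.adjoint ⟨y, hy⟩ ∈ T.domain)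
    (hW : ∀ y : K, ∀ hy : y ∈ T.adjoint.domain, ∀ h2 : T.adjoint ⟨y, hy⟩ ∈ T.domain,
      W y = T ⟨T.adjoint ⟨y, hy⟩, h2⟩) :
    ‖C‖ ^ 2 = ‖W‖ / (1 + ‖W‖) ∧ ‖W‖ / (1 + ‖W‖) < 1 :=
  norm_sq_comp_inv_sqrt_eq_of_finiteDimensional_general T hdense B R hBinv₁ hBinv₂ hR hRsq C hC W
    hWdom hW
end

section
/- For A in the open unit ball of L(K,H), the operator A₀ := (I - A*A)^{-1/2} A* is a closed densely-defined operator from H to K satisfying (I + A₀*A₀)^{-1/2} A₀* = A. -/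
/-!
`A₀ = R A*` is bounded and everywhere defined, hence closed, with adjoint `A₀* = A R`. Since
`R² = (1 - A*A)⁻¹`, the push-through identity `(1 - AA*)(1 + A R² A*) = 1` shows that
`B₀ = (1 + A₀*A₀)⁻¹` is `1 - AA*`, so the hat of `A₀` is `√(1 - AA*) A R`. The key fact is the
intertwining `√(1 - AA*) A = A √(1 - A*A)`: with `S = √(1 - A*A)`, the operator
`1 - A (1 + S)⁻¹ A*` is positive and squares to `1 - AA*`, because `(1 + S)⁻¹ (1 - S²) = 1 - S`.
As `√(1 - A*A) = R⁻¹` by uniqueness of positive square roots, the hat is `A`.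
-/

open ContinuousLinearMap
open scoped InnerProduct

section Ring

variable {α : Type*} [Ring α] {S W : α}

theorem mul_one_sub_mul_self_of_mul_one_add_eq_one (h : W * (1 + S) = 1) :
    W * (1 - S * S) = 1 - S := by
  rw [show 1 - S * S = (1 + S) * (1 - S) by noncomm_ring, ← mul_assoc, h, one_mul]

theorem mul_one_sub_mul_self_mul_of_mul_one_add_eq_one (h₁ : W * (1 + S) = 1)
    (h₂ : (1 + S) * W = 1) : W * (1 - S * S) * W = W + W - 1 := by
  rw [mul_one_sub_mul_self_of_mul_one_add_eq_one h₁, sub_mul, one_mul,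
    show S * W = 1 - W by rw [← h₂]; noncomm_ring]
  abel

end Ring

namespace CFC

variable {𝒜 : Type*} [CStarAlgebra 𝒜] [PartialOrder 𝒜] [StarOrderedRing 𝒜]

theorem sqrt_mul_eq_one_of_mul_self_mul_eq_one {b R : 𝒜} (hR : 0 ≤ R) (h₁ : R * R * b = 1)
    (h₂ : b * (R * R) = 1) : sqrt b * R = 1 := by
  lift R to 𝒜ˣ using isUnit_mul_self_iff.mp ⟨⟨R * R, b, h₁, h₂⟩, rfl⟩
  have hb : (↑R⁻¹ : 𝒜) * ↑R⁻¹ = b := by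
    rw [← mul_one (_ * _), ← h₁]
    simp only [← mul_assoc, mul_assoc _ _ (R : 𝒜), Units.inv_mul, mul_one, one_mul]
  rw [sqrt_unique hb (inv_nonneg_of_nonneg R hR), Units.inv_mul]

end CFC

namespace ContinuousLinearMap

section Normed

variable {𝕜 E F : Type*} [NormedField 𝕜] [NormedAddCommGroup E] [NormedSpace 𝕜 E]
  [NormedAddCommGroup F] [NormedSpace 𝕜 F]

theorem isClosed_toPMap (T : E →L[𝕜] F) {p : Submodule 𝕜 E} (hp : IsClosed (p : Set E)) :
    (T.toLinearMap.toPMap p).IsClosed := by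
  have : ((T.toLinearMap.toPMap p).graph : Set (E × F)) = {z | z.1 ∈ p} ∩ {z | T z.1 = z.2} := by
    ext ⟨x, y⟩
    simp [LinearPMap.mem_graph_iff, eq_comm]
  rw [LinearPMap.IsClosed, this]
  exact (hp.preimage continuous_fst).inter
    (isClosed_eq (T.continuous.comp continuous_fst) continuous_snd)

variable (A : E →L[𝕜] F) (B : F →L[𝕜] E) {Q : E →L[𝕜] E}

theorem one_add_comp_mul_one_sub_comp (h : Q * (1 - B ∘L A) = 1) :
    (1 + A ∘L Q ∘L B) * (1 - A ∘L B) = 1 :=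
  calc (1 + A ∘L Q ∘L B) * (1 - A ∘L B) = 1 - A ∘L B + A ∘L (Q * (1 - B ∘L A)) ∘L B := by
        simp only [mul_def, add_comp, sub_comp, comp_sub, one_def, id_comp, comp_id, comp_assoc]
        abel
    _ = 1 := by rw [h]; simp [one_def]

theorem one_sub_comp_mul_one_add_comp (h : (1 - B ∘L A) * Q = 1) :
    (1 - A ∘L B) * (1 + A ∘L Q ∘L B) = 1 :=
  calc (1 - A ∘L B) * (1 + A ∘L Q ∘L B) = 1 - A ∘L B + A ∘L ((1 - B ∘L A) * Q) ∘L B := by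
        simp only [mul_def, sub_comp, comp_sub, comp_add, one_def, id_comp, comp_id, comp_assoc]
    _ = 1 := by rw [h]; simp [one_def]

end Normed

section Hilbert

variable {E F : Type*} [NormedAddCommGroup E] [InnerProductSpace ℂ E] [CompleteSpace E]
  [NormedAddCommGroup F] [InnerProductSpace ℂ F] [CompleteSpace F] (A : E →L[ℂ] F)

theorem one_sub_adjoint_comp_self_nonneg (hA : ‖A‖ ≤ 1) : 0 ≤ 1 - A† ∘L A := by
  have hA' : 0 ≤ A† ∘L A := (nonneg_iff_isPositive _).2 (isPositive_adjoint_comp_self A)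
  refine sub_nonneg.2 <| (CStarAlgebra.norm_le_one_iff_of_nonneg _ hA').1 ?_
  rw [norm_adjoint_comp_self]
  exact mul_le_one₀ hA (norm_nonneg A) hA

theorem one_sub_comp_adjoint_nonneg (hA : ‖A‖ ≤ 1) : 0 ≤ 1 - A ∘L A† := by
  simpa using one_sub_adjoint_comp_self_nonneg (A†) (by rwa [LinearIsometryEquiv.norm_map])

theorem sqrt_one_sub_comp_adjoint_comp (hA : ‖A‖ ≤ 1) :
    CFC.sqrt (1 - A ∘L A†) ∘L A = A ∘L CFC.sqrt (1 - A† ∘L A) := by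
  set S := CFC.sqrt (1 - A† ∘L A)
  have hS : A† ∘L A = 1 - S * S := by
    rw [CFC.sqrt_mul_sqrt_self _ (one_sub_adjoint_comp_self_nonneg A hA), sub_sub_cancel]
  have h1S : 1 ≤ 1 + S := le_add_of_nonneg_right (CFC.sqrt_nonneg _)
  obtain ⟨u, hu⟩ := CStarAlgebra.isUnit_of_le 1 h1S isStrictlyPositive_one
  set W : E →L[ℂ] E := ↑u⁻¹
  have hW₁ : W * (1 + S) = 1 := hu ▸ u.inv_mul
  have hW₂ : (1 + S) * W = 1 := hu ▸ u.mul_inv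
  have h1W : 0 ≤ 1 - W :=
    sub_nonneg.2 (CStarAlgebra.inv_le_one (a := u) (show (1 : E →L[ℂ] E) ≤ u by rwa [hu]))
  set V : F →L[ℂ] F := 1 - A ∘L W ∘L A†
  have hVA : V ∘L A = A ∘L S :=
    calc V ∘L A = A ∘L (1 - W * (A† ∘L A)) := by
          simp only [V, sub_comp, comp_sub, one_def, id_comp, comp_id, mul_def, comp_assoc]
      _ = A ∘L S := by rw [hS, mul_one_sub_mul_self_of_mul_one_add_eq_one hW₁, sub_sub_cancel]
  have hVV : V * V = 1 - A ∘L A† :=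
    calc V * V = 1 - A ∘L W ∘L A† - A ∘L W ∘L A† + A ∘L (W * (A† ∘L A) * W) ∘L A† := by
          simp only [V, mul_def, sub_comp, comp_sub, one_def, id_comp, comp_id, comp_assoc]
          abel
      _ = 1 - A ∘L A† := by
          rw [hS, mul_one_sub_mul_self_mul_of_mul_one_add_eq_one hW₁ hW₂]
          simp only [add_comp, sub_comp, comp_add, comp_sub, one_def, id_comp]
          abel
  have hV : 0 ≤ V := by
    have : V = (1 - A ∘L A†) + A ∘L (1 - W) ∘L A† := by
      simp only [V, comp_sub, sub_comp, one_def, id_comp]; abel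
    rw [this, nonneg_iff_isPositive]
    exact ((nonneg_iff_isPositive _).1 (one_sub_comp_adjoint_nonneg A hA)).add
      (((nonneg_iff_isPositive _).1 h1W).conj_adjoint A)
  rw [CFC.sqrt_unique hVV hV, hVA]

end Hilbert

section PMap

variable {𝕜 E F : Type*} [RCLike 𝕜] [NormedAddCommGroup E] [InnerProductSpace 𝕜 E]
  [NormedAddCommGroup F] [InnerProductSpace 𝕜 F] [CompleteSpace E] [CompleteSpace F]
  (T : E →L[𝕜] F) {p : Submodule 𝕜 E}

theorem toPMap_adjoint_domain (hp : Dense (p : Set E)) :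
    (T.toLinearMap.toPMap p).adjoint.domain = ⊤ :=
  congrArg LinearPMap.domain (T.toPMap_adjoint_eq_adjoint_toPMap_of_dense hp)

theorem toPMap_adjoint_apply (hp : Dense (p : Set E))
    (y : (T.toLinearMap.toPMap p).adjoint.domain) : (T.toLinearMap.toPMap p).adjoint y = (T†) y :=
  LinearPMap.adjoint_apply_eq hp y fun x => adjoint_inner_left T x y

end PMap

end ContinuousLinearMap

theorem hat_of_ball_section_general
    {H K : Type*} [NormedAddCommGroup H] [InnerProductSpace ℂ H] [CompleteSpace H]
    [NormedAddCommGroup K] [InnerProductSpace ℂ K] [CompleteSpace K]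
    (A : K →L[ℂ] H) (hA : ‖A‖ < 1)
    (R : K →L[ℂ] K) (hR : R.IsPositive)
    (hRsq₁ : (R * R) * ((1 : K →L[ℂ] K) - (ContinuousLinearMap.adjoint A).comp A) = 1)
    (hRsq₂ : ((1 : K →L[ℂ] K) - (ContinuousLinearMap.adjoint A).comp A) * (R * R) = 1) :
    ∀ P : H →ₗ.[ℂ] K,
      P = (R.comp (ContinuousLinearMap.adjoint A) : H →L[ℂ] K).toLinearMap.toPMap ⊤ →
      Dense (P.domain : Set H) ∧ P.IsClosed ∧
      ∃ B₀ R₀ : H →L[ℂ] H, B₀.IsPositive ∧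
        (∀ p : {p : P.domain // P p ∈ P.adjoint.domain},
          B₀ ((p.1 : H) + P.adjoint ⟨P p.1, p.2⟩) = (p.1 : H)) ∧
        (∀ y : H, ∃ p : {p : P.domain // P p ∈ P.adjoint.domain},
          (p.1 : H) + P.adjoint ⟨P p.1, p.2⟩ = y) ∧
        R₀.IsPositive ∧ R₀ * R₀ = B₀ ∧
        P.adjoint.domain = ⊤ ∧
        (∀ y : K, ∀ hy : y ∈ P.adjoint.domain, A y = R₀ (P.adjoint ⟨y, hy⟩)) := by
  rintro P rfl
  have hdense : Dense ((⊤ : Submodule ℂ H) : Set H) := by simp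
  have hadj : (R ∘L A†)† = A ∘L R := by
    rw [adjoint_comp, adjoint_adjoint, hR.isSelfAdjoint.adjoint_eq]
  have hB₀ : 0 ≤ 1 - A ∘L A† := one_sub_comp_adjoint_nonneg A hA.le
  have hB₀_mul := one_sub_comp_mul_one_add_comp A (A†) hRsq₂
  have hmul_B₀ := one_add_comp_mul_one_sub_comp A (A†) hRsq₁
  have hSR : CFC.sqrt (1 - A† ∘L A) * R = 1 :=
    CFC.sqrt_mul_eq_one_of_mul_self_mul_eq_one ((nonneg_iff_isPositive R).2 hR) hRsq₁ hRsq₂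
  have hhat : CFC.sqrt (1 - A ∘L A†) ∘L (A ∘L R) = A := by
    rw [← comp_assoc, sqrt_one_sub_comp_adjoint_comp A hA.le, comp_assoc, ← mul_def, hSR, one_def,
      comp_id]
  refine ⟨hdense, isClosed_toPMap _ isClosed_univ, 1 - A ∘L A†, CFC.sqrt (1 - A ∘L A†),
    (nonneg_iff_isPositive _).1 hB₀, fun x => ?_, fun y => ?_,
    (nonneg_iff_isPositive _).1 (CFC.sqrt_nonneg _), CFC.sqrt_mul_sqrt_self _ hB₀,
    toPMap_adjoint_domain _ hdense, fun y hy => ?_⟩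
  · rw [toPMap_adjoint_apply _ hdense, hadj]
    exact congr($hB₀_mul x.1.1)
  · refine ⟨⟨⟨(1 - A ∘L A†) y, trivial⟩, by rw [toPMap_adjoint_domain _ hdense]; trivial⟩, ?_⟩
    rw [toPMap_adjoint_apply _ hdense, hadj]
    exact congr($hmul_B₀ y)
  · rw [toPMap_adjoint_apply _ hdense, hadj]
    exact congr($hhat y).symm

/-- Let `K` be finite dimensional, `A : K → H` bounded with `‖A‖ < 1`, and
let `R = (I - A*A)^{-1/2}` (the positive operator whose square is the inverse of
`I - A*A`).  Then `A₀ := (I - A*A)^{-1/2} A*`, viewed as a densely defined operator from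
`H` to `K` (here with domain all of `H`), is closed and densely defined, and its "hat"
`(I + A₀*A₀)^{-1/2} A₀*` equals `A`:  writing `B₀ = (I + A₀*A₀)^{-1}` and
`R₀ = (I + A₀*A₀)^{-1/2}`, one has `R₀ (A₀* y) = A y` for all `y`. -/
theorem hat_of_ball_section
    {H K : Type*} [NormedAddCommGroup H] [InnerProductSpace ℂ H] [CompleteSpace H]
    [NormedAddCommGroup K] [InnerProductSpace ℂ K] [CompleteSpace K]
    [FiniteDimensional ℂ K]
    (A : K →L[ℂ] H) (hA : ‖A‖ < 1)
    (R : K →L[ℂ] K) (hR : R.IsPositive)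
    (hRsq₁ : (R * R) * ((1 : K →L[ℂ] K) - (ContinuousLinearMap.adjoint A).comp A) = 1)
    (hRsq₂ : ((1 : K →L[ℂ] K) - (ContinuousLinearMap.adjoint A).comp A) * (R * R) = 1) :
    ∀ P : H →ₗ.[ℂ] K,
      P = (R.comp (ContinuousLinearMap.adjoint A) : H →L[ℂ] K).toLinearMap.toPMap ⊤ →
      Dense (P.domain : Set H) ∧ P.IsClosed ∧
      ∃ B₀ R₀ : H →L[ℂ] H, B₀.IsPositive ∧
        (∀ p : {p : P.domain // P p ∈ P.adjoint.domain},
          B₀ ((p.1 : H) + P.adjoint ⟨P p.1, p.2⟩) = (p.1 : H)) ∧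
        (∀ y : H, ∃ p : {p : P.domain // P p ∈ P.adjoint.domain},
          (p.1 : H) + P.adjoint ⟨P p.1, p.2⟩ = y) ∧
        R₀.IsPositive ∧ R₀ * R₀ = B₀ ∧
        P.adjoint.domain = ⊤ ∧
        (∀ y : K, ∀ hy : y ∈ P.adjoint.domain, A y = R₀ (P.adjoint ⟨y, hy⟩)) :=
  hat_of_ball_section_general A hA R hR hRsq₁ hRsq₂
end

section
/- For Z, A bounded operators with ‖Z‖ < 1 and ‖A‖ < 1, the identity (Z - A)(I - A*A)^{-1}(I - A*Z) = (I - ZA*)(I - AA*)^{-1}(Z - A) holds. -/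
open ContinuousLinearMap

/-- For bounded operators `Z, A : K → H` with `‖Z‖ < 1` and `‖A‖ < 1`
(so that `I - A*A` and `I - AA*` are invertible, with inverses `B` and `C`), the identity
`(Z - A)(I - A*A)^{-1}(I - A*Z) = (I - ZA*)(I - AA*)^{-1}(Z - A)` holds. -/
theorem mobius_commutation_identity
    {H K : Type*} [NormedAddCommGroup H] [InnerProductSpace ℂ H] [CompleteSpace H]
    [NormedAddCommGroup K] [InnerProductSpace ℂ K] [CompleteSpace K]
    (Z A : K →L[ℂ] H) (hZ : ‖Z‖ < 1) (hA : ‖A‖ < 1)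
    (B : K →L[ℂ] K)
    (hB₁ : ((1 : K →L[ℂ] K) - (adjoint A).comp A) * B = 1)
    (hB₂ : B * ((1 : K →L[ℂ] K) - (adjoint A).comp A) = 1)
    (C : H →L[ℂ] H)
    (hC₁ : ((1 : H →L[ℂ] H) - A.comp (adjoint A)) * C = 1)
    (hC₂ : C * ((1 : H →L[ℂ] H) - A.comp (adjoint A)) = 1) :
    (Z - A).comp (B.comp ((1 : K →L[ℂ] K) - (adjoint A).comp Z)) =
      ((1 : H →L[ℂ] H) - Z.comp (adjoint A)).comp (C.comp (Z - A)) := by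
  set A' := adjoint A with hA'
  set D := Z - A with hD
  have e1 : ((1 : H →L[ℂ] H) - A.comp A').comp C = 1 := hC₁
  have e2 : B.comp ((1 : K →L[ℂ] K) - A'.comp A) = 1 := hB₂
  have hswap : A'.comp ((1 : H →L[ℂ] H) - A.comp A') =
      ((1 : K →L[ℂ] K) - A'.comp A).comp A' := by
    simp [comp_sub, sub_comp, comp_assoc, ContinuousLinearMap.one_def]
  have h2 : B.comp A' = A'.comp C := by
    calc B.comp A' = B.comp (A'.comp (((1 : H →L[ℂ] H) - A.comp A').comp C)) := by
            rw [e1]; simp [ContinuousLinearMap.one_def]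
      _ = (B.comp ((1 : K →L[ℂ] K) - A'.comp A)).comp (A'.comp C) := by
            rw [← comp_assoc A', hswap, comp_assoc, ← comp_assoc B]
      _ = A'.comp C := by rw [e2]; simp [ContinuousLinearMap.one_def]
  have hr1 : (1 : K →L[ℂ] K) - A'.comp Z =
      ((1 : K →L[ℂ] K) - A'.comp A) - A'.comp D := by
    simp [hD, comp_sub]
  have hr2 : (1 : H →L[ℂ] H) - Z.comp A' =
      ((1 : H →L[ℂ] H) - A.comp A') - D.comp A' := by
    simp [hD, sub_comp]
  calc D.comp (B.comp ((1 : K →L[ℂ] K) - A'.comp Z))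
      = D.comp (B.comp ((1 : K →L[ℂ] K) - A'.comp A) - (B.comp A').comp D) := by
        rw [hr1, comp_sub, comp_assoc]
    _ = D - D.comp ((A'.comp C).comp D) := by
        rw [e2, h2, comp_sub]; simp [ContinuousLinearMap.one_def]
    _ = ((1 : H →L[ℂ] H) - A.comp A').comp (C.comp D) - (D.comp A').comp (C.comp D) := by
        have h3 : ((1 : H →L[ℂ] H) - A.comp A').comp (C.comp D) = D := by
          rw [← comp_assoc, e1]; simp [ContinuousLinearMap.one_def]
        rw [h3, comp_assoc D A', ← comp_assoc A' C D]
    _ = ((1 : H →L[ℂ] H) - Z.comp A').comp (C.comp D) := by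
        rw [hr2]; simp [sub_comp, ContinuousLinearMap.one_def, comp_assoc]
end

section
/- If Y = (I - AA*)^{1/2}(I - ZA*)^{-1}(Z - A)(I - A*A)^{-1/2} with ‖A‖ < 1 and ‖Z‖ < 1, then I + A*Y = (I - A*A)^{1/2}(I - A*Z)^{-1}(I - A*A)^{1/2}; in particular I + A*Y is invertible. -/
/-!
Write `S = (I - A*A)^{1/2}`, `P = (I - AA*)^{1/2}`, `Q = S⁻¹`, `W = (I - A*Z)⁻¹`. The heart of the
matter is the intertwining `A* P = S A*`, obtained from `A*(I - AA*) = (I - A*A)A*`: for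
`D = A* P - S A*` one finds `D P = -S D`, so `D*D P = -D* S D ≤ 0`; being selfadjoint, `D*D P` is
also a product of commuting positive operators, hence `≥ 0`. Thus `D*D P = 0`, and `P` is invertible
because `‖A‖ < 1`, so `D = 0`. With the push-through identity `A*(I - ZA*)⁻¹ = W A*` this gives
`A*Y = S W (A*Z - A*A) Q`, and writing `S = (I - A*A) Q = ((I - A*Z) + (A*Z - A*A)) Q` turns
`S W S` into `I + A*Y`.
-/

open ContinuousLinearMap

namespace ContinuousLinearMap

theorem comp_eq_comp_of_mul_one_sub_comp_eq_one {R E F : Type*} [Ring R]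
    [AddCommGroup E] [TopologicalSpace E] [IsTopologicalAddGroup E] [Module R E]
    [AddCommGroup F] [TopologicalSpace F] [IsTopologicalAddGroup F] [Module R F]
    {B : E →L[R] F} {C : F →L[R] E} {M : E →L[R] E} {W : F →L[R] F}
    (hM : (1 - C.comp B) * M = 1) (hW : W * (1 - B.comp C) = 1) : B.comp M = W.comp B :=
  calc B.comp M = (W * (1 - B.comp C)).comp (B.comp M) := by rw [hW, one_def, id_comp]
    _ = W.comp (B.comp ((1 - C.comp B) * M)) := by
      simp only [mul_def, sub_comp, comp_sub, one_def, id_comp, comp_id, comp_assoc]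
    _ = W.comp B := by rw [hM, one_def, comp_id]

section Hilbert

variable {H K : Type*} [NormedAddCommGroup H] [InnerProductSpace ℂ H] [CompleteSpace H]
  [NormedAddCommGroup K] [InnerProductSpace ℂ K] [CompleteSpace K]

theorem IsPositive.comp_eq_comp_of_mul_self {T : H →L[ℂ] K} {P : H →L[ℂ] H} {S : K →L[ℂ] K}
    (hP : P.IsPositive) (hS : S.IsPositive) (hP_unit : IsUnit P)
    (h : T.comp (P * P) = (S * S).comp T) : T.comp P = S.comp T := by
  set D := T.comp P - S.comp T
  have hDP : D.comp P = -(S.comp D) :=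
    calc D.comp P = T.comp (P * P) - S.comp (T.comp P) := by
          simp only [D, sub_comp, comp_assoc, mul_def]
      _ = -(S.comp D) := by
          rw [h, mul_def, comp_assoc]
          simp only [D, comp_sub, neg_sub]
  set E := (adjoint D).comp D
  have hEP : E * P = -((adjoint D).comp (S.comp D)) := by
    rw [mul_def, comp_assoc, hDP, comp_neg]
  have hEP_nonpos : E * P ≤ 0 := by
    rw [hEP, neg_nonpos, nonneg_iff_isPositive]
    exact hS.adjoint_conj D
  have hE_nonneg : 0 ≤ E := (nonneg_iff_isPositive E).2 (isPositive_adjoint_comp_self D)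
  have hP_nonneg : 0 ≤ P := (nonneg_iff_isPositive P).2 hP
  have hEP_selfAdjoint : IsSelfAdjoint (E * P) := by
    rw [hEP]
    exact (hS.adjoint_conj D).isSelfAdjoint.neg
  have hEP_nonneg : 0 ≤ E * P :=
    Commute.mul_nonneg hE_nonneg hP_nonneg <|
      (hE_nonneg.isSelfAdjoint.commute_iff hP_nonneg.isSelfAdjoint).2 hEP_selfAdjoint
  have hE : E = 0 := hP_unit.mul_left_eq_zero.1 (le_antisymm hEP_nonpos hEP_nonneg)
  exact sub_eq_zero.1 (adjoint_comp_self_eq_zero_iff.1 hE)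

theorem isUnit_one_sub_comp_adjoint {A : K →L[ℂ] H} (hA : ‖A‖ < 1) :
    IsUnit (1 - A.comp (adjoint A)) := by
  refine isUnit_one_sub_of_norm_lt_one ?_
  have h := norm_adjoint_comp_self (adjoint A)
  rw [adjoint_adjoint, LinearIsometryEquiv.norm_map] at h
  rw [h]
  nlinarith [norm_nonneg A]

end Hilbert

end ContinuousLinearMap

theorem mul_mul_eq_one_add_of_mul_self_eq_one_sub {R : Type*} [Ring R] {S Q W a c : R}
    (hW : W * (1 - c) = 1) (hS : S * S = 1 - a) (hSQ : S * Q = 1) :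
    S * W * S = 1 + S * W * (c - a) * Q := by
  have hS' : S = ((1 - c) + (c - a)) * Q := by
    rw [sub_add_sub_cancel, ← hS, mul_assoc, hSQ, mul_one]
  calc S * W * S = S * W * (((1 - c) + (c - a)) * Q) := congrArg (S * W * ·) hS'
    _ = S * (W * (1 - c)) * Q + S * W * (c - a) * Q := by noncomm_ring
    _ = 1 + S * W * (c - a) * Q := by rw [hW, mul_one, hSQ]

theorem one_add_adjoint_comp_Y_eq_general
    {H K : Type*} [NormedAddCommGroup H] [InnerProductSpace ℂ H] [CompleteSpace H]
    [NormedAddCommGroup K] [InnerProductSpace ℂ K] [CompleteSpace K]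
    (A Z : K →L[ℂ] H) (hA : ‖A‖ < 1)
    (P : H →L[ℂ] H) (hP : P.IsPositive)
    (hPsq : P * P = (1 : H →L[ℂ] H) - A.comp (adjoint A))
    (M : H →L[ℂ] H)
    (hM₁ : ((1 : H →L[ℂ] H) - Z.comp (adjoint A)) * M = 1)
    (S Q : K →L[ℂ] K) (hS : S.IsPositive)
    (hSsq : S * S = (1 : K →L[ℂ] K) - (adjoint A).comp A)
    (hQS : Q * S = 1) (hSQ : S * Q = 1)
    (W : K →L[ℂ] K)
    (hW₁ : ((1 : K →L[ℂ] K) - (adjoint A).comp Z) * W = 1)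
    (hW₂ : W * ((1 : K →L[ℂ] K) - (adjoint A).comp Z) = 1)
    (Y : K →L[ℂ] H) (hY : Y = P.comp (M.comp ((Z - A).comp Q))) :
    (1 : K →L[ℂ] K) + (adjoint A).comp Y = S * W * S ∧
      IsUnit ((1 : K →L[ℂ] K) + (adjoint A).comp Y) := by
  have hP_unit : IsUnit P := isUnit_mul_self_iff.1 (hPsq ▸ isUnit_one_sub_comp_adjoint hA)
  have hAP : (adjoint A).comp P = S.comp (adjoint A) :=
    hP.comp_eq_comp_of_mul_self hS hP_unit <| by
      rw [hPsq, hSsq]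
      ext x
      simp
  have hAM : (adjoint A).comp M = W.comp (adjoint A) :=
    comp_eq_comp_of_mul_one_sub_comp_eq_one hM₁ hW₂
  have hAY : (adjoint A).comp Y = S * W * ((adjoint A).comp Z - (adjoint A).comp A) * Q := by
    rw [hY, ← comp_assoc, hAP, comp_assoc, ← comp_assoc _ M, hAM]
    simp only [mul_def, comp_assoc, comp_sub, sub_comp]
  have hS_unit : IsUnit S := ⟨⟨S, Q, hSQ, hQS⟩, rfl⟩
  have hW_unit : IsUnit W := ⟨⟨W, _, hW₂, hW₁⟩, rfl⟩
  rw [hAY, ← mul_mul_eq_one_add_of_mul_self_eq_one_sub hW₂ hSsq hSQ]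
  exact ⟨rfl, (hS_unit.mul hW_unit).mul hS_unit⟩

/-- Let `A, Z : K → H` with `‖A‖ < 1`, `‖Z‖ < 1`.  Let
`P = (I - AA*)^{1/2}` (positive square root), `M = (I - ZA*)^{-1}`,
`S = (I - A*A)^{1/2}` (positive square root) with inverse `Q = (I - A*A)^{-1/2}`, and
`W = (I - A*Z)^{-1}`.  If `Y = (I - AA*)^{1/2}(I - ZA*)^{-1}(Z - A)(I - A*A)^{-1/2}`, then
`I + A*Y = (I - A*A)^{1/2}(I - A*Z)^{-1}(I - A*A)^{1/2}`; in particular `I + A*Y` is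
invertible. -/
theorem one_add_adjoint_comp_Y_eq
    {H K : Type*} [NormedAddCommGroup H] [InnerProductSpace ℂ H] [CompleteSpace H]
    [NormedAddCommGroup K] [InnerProductSpace ℂ K] [CompleteSpace K]
    (A Z : K →L[ℂ] H) (hA : ‖A‖ < 1) (hZ : ‖Z‖ < 1)
    (P : H →L[ℂ] H) (hP : P.IsPositive)
    (hPsq : P * P = (1 : H →L[ℂ] H) - A.comp (adjoint A))
    (M : H →L[ℂ] H)
    (hM₁ : ((1 : H →L[ℂ] H) - Z.comp (adjoint A)) * M = 1)
    (hM₂ : M * ((1 : H →L[ℂ] H) - Z.comp (adjoint A)) = 1)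
    (S Q : K →L[ℂ] K) (hS : S.IsPositive)
    (hSsq : S * S = (1 : K →L[ℂ] K) - (adjoint A).comp A)
    (hQ : Q.IsPositive) (hQS : Q * S = 1) (hSQ : S * Q = 1)
    (W : K →L[ℂ] K)
    (hW₁ : ((1 : K →L[ℂ] K) - (adjoint A).comp Z) * W = 1)
    (hW₂ : W * ((1 : K →L[ℂ] K) - (adjoint A).comp Z) = 1)
    (Y : K →L[ℂ] H) (hY : Y = P.comp (M.comp ((Z - A).comp Q))) :
    (1 : K →L[ℂ] K) + (adjoint A).comp Y = S * W * S ∧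
      IsUnit ((1 : K →L[ℂ] K) + (adjoint A).comp Y) :=
  one_add_adjoint_comp_Y_eq_general A Z hA P hP hPsq M hM₁ S Q hS hSsq hQS hSQ W hW₁ hW₂ Y hY
end

section
/- When K is finite-dimensional, the Möbius-type map η(Z) = (I - AA*)^{-1/2}(Z + A)(I + A*Z)^{-1}(I - A*A)^{1/2} on the open unit ball of L(K,H) is continuous with respect to the weak operator topology. -/
open ContinuousLinearMap

/-- The Möbius-type transformation
`η(Z) = (I - AA*)^{-1/2} (Z + A) (I + A*Z)^{-1} (I - A*A)^{1/2}`, where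
`P = (I - AA*)^{-1/2}` and `S = (I - A*A)^{1/2}` are given. -/
noncomputable def mobiusEta {H K : Type*}
    [NormedAddCommGroup H] [InnerProductSpace ℂ H] [CompleteSpace H]
    [NormedAddCommGroup K] [InnerProductSpace ℂ K] [CompleteSpace K]
    (A : K →L[ℂ] H) (P : H →L[ℂ] H) (S : K →L[ℂ] K) (Z : K →L[ℂ] H) : K →L[ℂ] H :=
  P.comp ((Z + A).comp ((Ring.inverse ((1 : K →L[ℂ] K) + (adjoint A).comp Z)).comp S))

/-!
Because `K` is finite-dimensional, a vector `v : K` is a finite combination of basis vectors,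
so `(W, v) ↦ ⟪y, W v⟫` is jointly continuous for the weak operator topology in `W` and the norm
topology in `v`; hence `W ↦ W ∘ T` is WOT-continuous as `T` varies norm-continuously. Also
`L(K, K)` is finite-dimensional, so `W ↦ A*W` is continuous from the WOT into the norm topology,
and on the unit ball `‖A*W‖ < 1`, so `(I + A*W)⁻¹ S` depends norm-continuously on `W`.
-/

theorem continuousOn_ring_inverse_one_add {X R : Type*} [TopologicalSpace X] [NormedRing R]
    [HasSummableGeomSeries R] {f : X → R} {s : Set X} (hf : ContinuousOn f s)
    (hs : ∀ x ∈ s, ‖f x‖ < 1) : ContinuousOn (fun x => Ring.inverse (1 + f x)) s := by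
  intro x hx
  obtain ⟨u, hu⟩ : IsUnit (1 + f x) := by
    simpa only [sub_neg_eq_add] using
      isUnit_one_sub_of_norm_lt_one (x := -f x) (by simpa only [norm_neg] using hs x hx)
  have hinv : ContinuousAt Ring.inverse (1 + f x) := hu ▸ NormedRing.inverse_continuousAt u
  exact hinv.comp_continuousWithinAt (f := fun x => 1 + f x) ((hf x hx).const_add 1)

namespace ContinuousLinearMapWOT

variable {𝕜 E F G : Type*} [RCLike 𝕜]
  [NormedAddCommGroup E] [NormedSpace 𝕜 E] [NormedAddCommGroup F] [NormedSpace 𝕜 F]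
  [NormedAddCommGroup G] [NormedSpace 𝕜 G]

theorem continuous_dual_apply_prod [FiniteDimensional 𝕜 E] (y : StrongDual 𝕜 F) :
    Continuous fun p : (E →WOT[𝕜] F) × E => y (p.1 p.2) := by
  let b := Module.finBasis 𝕜 E
  have hexpand : (fun p : (E →WOT[𝕜] F) × E => y (p.1 p.2)) =
      fun p => ∑ j, b.coord j p.2 * y (p.1 (b j)) := by
    funext p
    calc y (p.1 p.2) = y (p.1 (∑ j, b.repr p.2 j • b j)) := by rw [b.sum_repr]
      _ = _ := by simp only [map_sum, map_smul, smul_eq_mul, Module.Basis.coord_apply]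
  rw [hexpand]
  refine continuous_finsetSum _ fun j _ => ?_
  exact ((LinearMap.continuous_of_finiteDimensional (b.coord j)).comp continuous_snd).mul
    ((continuous_dual_apply (b j) y).comp continuous_fst)

theorem continuous_comp_ofCLM [FiniteDimensional 𝕜 F] :
    Continuous fun p : (F →WOT[𝕜] G) × (E →L[𝕜] F) => p.1.comp (ofCLM p.2) :=
  continuous_of_dual_apply_continuous fun x y =>
    (continuous_dual_apply_prod y).comp
      (continuous_fst.prodMk ((continuous_eval_const x).comp continuous_snd))

theorem continuous_toCLM [FiniteDimensional 𝕜 E] [FiniteDimensional 𝕜 F] :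
    Continuous (toCLM : (E →WOT[𝕜] F) → E →L[𝕜] F) := by
  have : FiniteDimensional 𝕜 (E →WOT[𝕜] F) := (linearEquiv 𝕜).symm.finiteDimensional
  exact LinearMap.continuous_of_finiteDimensional
    (linearEquiv 𝕜 : (E →WOT[𝕜] F) ≃ₗ[𝕜] E →L[𝕜] F).toLinearMap

theorem continuous_postcomp_toCLM [FiniteDimensional 𝕜 E] [FiniteDimensional 𝕜 G]
    (B : F →L[𝕜] G) : Continuous fun W : E →WOT[𝕜] F => B.comp (toCLM W) :=
  continuous_toCLM.comp (continuous_postcomp (ofCLM B))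

end ContinuousLinearMapWOT

open ContinuousLinearMapWOT

theorem mobiusEta_continuousOn_wot_general
    {H K : Type*} [NormedAddCommGroup H] [InnerProductSpace ℂ H] [CompleteSpace H]
    [NormedAddCommGroup K] [InnerProductSpace ℂ K] [CompleteSpace K]
    [FiniteDimensional ℂ K]
    (A : K →L[ℂ] H) (hA : ‖A‖ < 1)
    (P : H →L[ℂ] H) (S : K →L[ℂ] K) :
    ContinuousOn
      (fun W : K →WOT[ℂ] H =>
        ((ContinuousLinearMapWOT.linearEquiv ℂ).symm : (K →L[ℂ] H) ≃ₗ[ℂ] (K →WOT[ℂ] H))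
          (mobiusEta A P S (((ContinuousLinearMapWOT.linearEquiv ℂ : (K →WOT[ℂ] H) ≃ₗ[ℂ] (K →L[ℂ] H)) W))))
      {W : K →WOT[ℂ] H | ‖(ContinuousLinearMapWOT.linearEquiv ℂ : (K →WOT[ℂ] H) ≃ₗ[ℂ] (K →L[ℂ] H)) W‖ < 1} := by
  have hsmall : ∀ W : K →WOT[ℂ] H, ‖toCLM W‖ < 1 → ‖(adjoint A).comp (toCLM W)‖ < 1 :=
    fun W hW => calc
      _ ≤ ‖adjoint A‖ * ‖toCLM W‖ := opNorm_comp_le _ _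
      _ < 1 := by
        rw [adjoint.norm_map]
        exact mul_lt_one_of_nonneg_of_lt_one_left (norm_nonneg _) hA hW.le
  have hden : ContinuousOn
      (fun W : K →WOT[ℂ] H => (Ring.inverse (1 + (adjoint A).comp (toCLM W))).comp S)
      {W | ‖toCLM W‖ < 1} :=
    (continuousOn_ring_inverse_one_add (continuous_postcomp_toCLM (adjoint A)).continuousOn
      hsmall).clm_comp continuousOn_const
  -- `mobiusEta A P S W` unfolds to `P ∘ ((W + A) ∘ ((I + A*W)⁻¹ ∘ S))`.
  exact (continuous_postcomp (ofCLM P)).comp_continuousOn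
    (continuous_comp_ofCLM.comp_continuousOn
      ((continuous_add_const (ofCLM A)).continuousOn.prodMk hden))

/-- When `K` is finite dimensional, the Möbius-type map
`η(Z) = (I - AA*)^{-1/2}(Z + A)(I + A*Z)^{-1}(I - A*A)^{1/2}` on the open unit ball of
`L(K,H)` is continuous with respect to the weak operator topology (on both sides). -/
theorem mobiusEta_continuousOn_wot
    {H K : Type*} [NormedAddCommGroup H] [InnerProductSpace ℂ H] [CompleteSpace H]
    [NormedAddCommGroup K] [InnerProductSpace ℂ K] [CompleteSpace K]
    [FiniteDimensional ℂ K]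
    (A : K →L[ℂ] H) (hA : ‖A‖ < 1)
    (P : H →L[ℂ] H) (hP : P.IsPositive)
    (hP₁ : (P * P) * ((1 : H →L[ℂ] H) - A.comp (adjoint A)) = 1)
    (hP₂ : ((1 : H →L[ℂ] H) - A.comp (adjoint A)) * (P * P) = 1)
    (S : K →L[ℂ] K) (hS : S.IsPositive)
    (hSsq : S * S = (1 : K →L[ℂ] K) - (adjoint A).comp A) :
    ContinuousOn
      (fun W : K →WOT[ℂ] H =>
        ((ContinuousLinearMapWOT.linearEquiv ℂ).symm : (K →L[ℂ] H) ≃ₗ[ℂ] (K →WOT[ℂ] H))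
          (mobiusEta A P S (((ContinuousLinearMapWOT.linearEquiv ℂ : (K →WOT[ℂ] H) ≃ₗ[ℂ] (K →L[ℂ] H)) W))))
      {W : K →WOT[ℂ] H | ‖(ContinuousLinearMapWOT.linearEquiv ℂ : (K →WOT[ℂ] H) ≃ₗ[ℂ] (K →L[ℂ] H)) W‖ < 1} :=
  mobiusEta_continuousOn_wot_general A hA P S
end

section
/- The function d(T,S) = tanh^{-1} ‖Ṡ-to-Ṫ Möbius image‖ on C(H,K), equivalently d(T,S) = K_B(Ṫ, Ṡ) where K_B is the Kobayashi distance on the open unit ball B of L(K,H) and Ṫ = (I+T*T)^{-1/2}T*, defines a metric on C(H,K). -/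
/-- `artanh x = ½ log((1+x)/(1-x))`, the inverse hyperbolic tangent. -/
noncomputable def artanh (x : ℝ) : ℝ := (1 / 2) * Real.log ((1 + x) / (1 - x))

/-- The Poincaré distance `ω(a,b) = tanh⁻¹ (|a-b| / |1 - āb|)` on the open unit disc. -/
noncomputable def poincareDist (a b : ℂ) : ℝ :=
  artanh (‖a - b‖ / ‖1 - (starRingEnd ℂ) a * b‖)

variable {X : Type*} [NormedAddCommGroup X] [NormedSpace ℂ X]

/-- An analytic chain joining `x` and `y` in the open unit ball of a complex Banach
space `X`: holomorphic maps `f 0, …, f n` from the unit disc into the ball, together with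
points `z i, w i` of the disc, such that `f 0 (z 0) = x`, `f n (w n) = y` and
`f i (w i) = f (i+1) (z (i+1))`. -/
structure AnalyticChain (x y : X) where
  n : ℕ
  f : Fin (n + 1) → ℂ → X
  z : Fin (n + 1) → ℂ
  w : Fin (n + 1) → ℂ
  holo : ∀ i, DifferentiableOn ℂ (f i) (Metric.ball 0 1)
  maps : ∀ i, ∀ c ∈ Metric.ball (0 : ℂ) 1, f i c ∈ Metric.ball (0 : X) 1
  z_mem : ∀ i, z i ∈ Metric.ball (0 : ℂ) 1
  w_mem : ∀ i, w i ∈ Metric.ball (0 : ℂ) 1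
  first : f 0 (z 0) = x
  last : f (Fin.last n) (w (Fin.last n)) = y
  link : ∀ i : Fin n, f i.castSucc (w i.castSucc) = f i.succ (z i.succ)

/-- The length `∑ ω(zᵢ, wᵢ)` of an analytic chain. -/
noncomputable def AnalyticChain.length {x y : X} (c : AnalyticChain x y) : ℝ :=
  ∑ i, poincareDist (c.z i) (c.w i)

/-- The Kobayashi (pseudo-)distance on the open unit ball of `X`: the infimum of lengths
of analytic chains joining `x` and `y`. -/
noncomputable def kobayashiDist (x y : X) : ℝ :=
  sInf (Set.range fun c : AnalyticChain x y => c.length)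

section ClosedDenseOperators

variable {H K : Type*} [NormedAddCommGroup H] [InnerProductSpace ℂ H] [CompleteSpace H]
  [NormedAddCommGroup K] [InnerProductSpace ℂ K] [CompleteSpace K]

/-- `C(H,K)`: the closed densely-defined linear operators from `H` to `K`. -/
def ClosedDenseOp (H K : Type*) [NormedAddCommGroup H] [InnerProductSpace ℂ H]
    [NormedAddCommGroup K] [InnerProductSpace ℂ K] : Type _ :=
  {T : H →ₗ.[ℂ] K // Dense (T.domain : Set H) ∧ T.IsClosed}

/-- `IsHat T A` says that the bounded operator `A : K → H` is
`Ṫ = (I + T*T)^{-1/2} T*`:  there are bounded positive operators `B` and `R` on `H` such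
that `B` is the (everywhere defined) inverse of `I + T*T`, `R` is the positive square root
of `B` (so `R = (I + T*T)^{-1/2}`), the adjoint `T*` is everywhere defined, `‖A‖ < 1`
and `A y = R (T* y)` for all `y`. -/
def IsHat (T : H →ₗ.[ℂ] K) (A : K →L[ℂ] H) : Prop :=
  ∃ B R : H →L[ℂ] H, B.IsPositive ∧
    (∀ p : {p : T.domain // T p ∈ T.adjoint.domain},
      B ((p.1 : H) + T.adjoint ⟨T p.1, p.2⟩) = (p.1 : H)) ∧
    (∀ y : H, ∃ p : {p : T.domain // T p ∈ T.adjoint.domain},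
      (p.1 : H) + T.adjoint ⟨T p.1, p.2⟩ = y) ∧
    R.IsPositive ∧ R * R = B ∧
    T.adjoint.domain = ⊤ ∧ ‖A‖ < 1 ∧
    ∀ y : K, ∀ hy : y ∈ T.adjoint.domain, A y = R (T.adjoint ⟨y, hy⟩)

end ClosedDenseOperators

/-!
The Kobayashi distance on the unit ball is symmetric and satisfies the triangle inequality
because analytic chains can be reversed and concatenated. It separates points because the Schwarz
lemma, applied to a disc `f` precomposed with the disc automorphism exchanging `0` and `z`, gives
`‖f z - f w‖ ≤ 2 ‖(z - w) / (1 - z̄ w)‖ ≤ 4 ω(z, w)`, and these bounds telescope along a chain to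
`‖x - y‖ ≤ 4 K_B(x, y)`.

The map `T ↦ Ṫ` is injective: by the closed graph theorem `T*` is a bounded operator `t`, `T` is
everywhere defined with `T = t*`, and `R = (I + T*T)^{-1/2}` commutes with `C = 1 + t t*`, whose
inverse is `R²`. Hence `Ṫ Ṫ* = R (C - 1) R = 1 - R²`, so `R` is the positive square root of
`1 - Ṫ Ṫ*`; as `R` is injective, `Ṫ = R t` determines `t` and therefore `T`.
-/

open Metric Set ComplexConjugate

noncomputable def mobius (a ζ : ℂ) : ℂ := (a - ζ) / (1 - conj a * ζ)

lemma artanh_nonneg {t : ℝ} (h₀ : 0 ≤ t) (h₁ : t < 1) : 0 ≤ artanh t :=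
  mul_nonneg (by norm_num) <| Real.log_nonneg <| (one_le_div (by linarith)).2 (by linarith)

lemma le_two_mul_artanh {t : ℝ} (h₀ : 0 ≤ t) (h₁ : t < 1) : t ≤ 2 * artanh t := by
  have hlog : Real.log ((1 + t) / (1 - t)) = Real.log (1 + t) - Real.log (1 - t) :=
    Real.log_div (by linarith) (by linarith)
  have h₂ : 0 ≤ Real.log (1 + t) := Real.log_nonneg (by linarith)
  have h₃ : Real.log (1 - t) ≤ (1 - t) - 1 := Real.log_le_sub_one_of_pos (by linarith)
  rw [artanh, hlog]
  linarith

lemma norm_one_sub_conj_mul_sq_sub_norm_sub_sq (a ζ : ℂ) :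
    ‖1 - conj a * ζ‖ ^ 2 - ‖a - ζ‖ ^ 2 = (1 - ‖a‖ ^ 2) * (1 - ‖ζ‖ ^ 2) := by
  simp only [Complex.sq_norm, Complex.normSq_apply, Complex.sub_re, Complex.sub_im,
    Complex.mul_re, Complex.mul_im, Complex.conj_re, Complex.conj_im, Complex.one_re,
    Complex.one_im]
  ring

lemma one_sub_conj_mul_ne_zero {a ζ : ℂ} (ha : ‖a‖ < 1) (hζ : ‖ζ‖ ≤ 1) :
    1 - conj a * ζ ≠ 0 := by
  refine sub_ne_zero.2 fun h => ?_
  have : ‖conj a * ζ‖ < 1 := by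
    rw [norm_mul, Complex.norm_conj]
    nlinarith [norm_nonneg a, norm_nonneg ζ]
  rw [← h, norm_one] at this
  exact this.false

lemma norm_mobius_lt_one {a ζ : ℂ} (ha : ‖a‖ < 1) (hζ : ‖ζ‖ < 1) : ‖mobius a ζ‖ < 1 := by
  have hden := norm_pos_iff.2 (one_sub_conj_mul_ne_zero ha hζ.le)
  rw [mobius, norm_div, div_lt_one hden]
  refine lt_of_pow_lt_pow_left₀ 2 (norm_nonneg _) (sub_pos.1 ?_)
  rw [norm_one_sub_conj_mul_sq_sub_norm_sub_sq]
  have := norm_nonneg a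
  have := norm_nonneg ζ
  exact mul_pos (by nlinarith) (by nlinarith)

lemma mapsTo_mobius {a : ℂ} (ha : ‖a‖ < 1) : MapsTo (mobius a) (ball 0 1) (ball 0 1) :=
  fun _ hζ => mem_ball_zero_iff.2 (norm_mobius_lt_one ha (mem_ball_zero_iff.1 hζ))

lemma differentiableOn_mobius {a : ℂ} (ha : ‖a‖ < 1) :
    DifferentiableOn ℂ (mobius a) (ball 0 1) := fun _ hζ =>
  ((differentiableAt_const a).sub differentiableAt_id).div
    ((differentiableAt_const 1).sub (differentiableAt_id.const_mul _))
    (one_sub_conj_mul_ne_zero ha (mem_ball_zero_iff.1 hζ).le) |>.differentiableWithinAt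

lemma mobius_zero (a : ℂ) : mobius a 0 = a := by simp [mobius]

lemma mobius_mobius {a ζ : ℂ} (ha : ‖a‖ < 1) (hζ : ‖ζ‖ < 1) : mobius a (mobius a ζ) = ζ := by
  rw [mobius, div_eq_iff (one_sub_conj_mul_ne_zero ha (norm_mobius_lt_one ha hζ).le), mobius,
    div_eq_mul_inv]
  linear_combination (ζ - a) * mul_inv_cancel₀ (one_sub_conj_mul_ne_zero ha hζ.le)

lemma poincareDist_eq_artanh_norm_mobius (a b : ℂ) : poincareDist a b = artanh ‖mobius a b‖ := by
  rw [poincareDist, mobius, norm_div]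

lemma poincareDist_nonneg {a b : ℂ} (ha : ‖a‖ < 1) (hb : ‖b‖ < 1) : 0 ≤ poincareDist a b := by
  rw [poincareDist_eq_artanh_norm_mobius]
  exact artanh_nonneg (norm_nonneg _) (norm_mobius_lt_one ha hb)

lemma poincareDist_self (a : ℂ) : poincareDist a a = 0 := by
  simp [poincareDist, artanh]

lemma poincareDist_comm (a b : ℂ) : poincareDist a b = poincareDist b a := by
  rw [poincareDist, poincareDist, norm_sub_rev a b, ← Complex.norm_conj (1 - conj a * b)]
  simp [mul_comm]

lemma norm_sub_le_four_mul_poincareDist {f : ℂ → X} (hf : DifferentiableOn ℂ f (ball 0 1))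
    (hmaps : MapsTo f (ball 0 1) (ball 0 1)) {z w : ℂ} (hz : ‖z‖ < 1) (hw : ‖w‖ < 1) :
    ‖f z - f w‖ ≤ 4 * poincareDist z w := by
  have hmob := norm_mobius_lt_one hz hw
  have hschwarz :
      dist (f (mobius z (mobius z w))) (f (mobius z 0)) ≤ 2 / 1 * dist (mobius z w) 0 := by
    refine Complex.dist_le_div_mul_dist_of_mapsTo_ball
      (hf.comp (differentiableOn_mobius hz) (mapsTo_mobius hz)) ?_ (mem_ball_zero_iff.2 hmob)
    intro ζ hζ
    have h₁ := mem_ball_zero_iff.1 (hmaps (mapsTo_mobius hz hζ))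
    have h₂ := mem_ball_zero_iff.1 (hmaps (mapsTo_mobius hz (mem_ball_self one_pos)))
    rw [mem_closedBall, dist_eq_norm]
    calc _ ≤ ‖f (mobius z ζ)‖ + ‖f (mobius z 0)‖ := norm_sub_le _ _
      _ ≤ 2 := by linarith
  rw [mobius_mobius hz hw, mobius_zero, dist_eq_norm, dist_zero_right, norm_sub_rev] at hschwarz
  rw [poincareDist_eq_artanh_norm_mobius]
  linarith [le_two_mul_artanh (norm_nonneg _) hmob]

lemma Fin.append_of_forall {m n : ℕ} {α : Type*} {p : α → Prop} {u : Fin m → α}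
    {v : Fin n → α} (hu : ∀ i, p (u i)) (hv : ∀ i, p (v i)) (i : Fin (m + n)) :
    p (Fin.append u v i) := by
  induction i using Fin.addCases <;> simp [hu, hv]

lemma Fin.sum_sub_eq_sub_of_succ {G : Type*} [AddCommGroup G] {n : ℕ}
    (g h : Fin (n + 1) → G) (hlink : ∀ i : Fin n, h i.castSucc = g i.succ) :
    ∑ i, (g i - h i) = g 0 - h (Fin.last n) := by
  induction n with
  | zero => simp
  | succ n ih =>
    rw [Fin.sum_univ_castSucc, ih (fun i => g i.castSucc) (fun i => h i.castSucc)
      fun i => by simpa using hlink i.castSucc, ← Fin.succ_last, ← hlink (Fin.last n)]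
    simp

lemma mapsTo_smul_ball {v : X} (hv : ‖v‖ ≤ 1) :
    MapsTo (· • v) (ball (0 : ℂ) 1) (ball 0 1) := fun c hc => by
  rw [mem_ball_zero_iff] at hc ⊢
  rw [norm_smul]
  nlinarith [norm_nonneg c, norm_nonneg v]

lemma exists_smul_eq_of_norm_lt_one {x : X} (hx : ‖x‖ < 1) :
    ∃ a : ℂ, ∃ v : X, a ∈ ball (0 : ℂ) 1 ∧ ‖v‖ ≤ 1 ∧ a • v = x := by
  rcases eq_or_ne x 0 with rfl | hx₀
  · exact ⟨0, 0, mem_ball_self one_pos, by simp, smul_zero _⟩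
  · refine ⟨‖x‖, (‖x‖ : ℂ)⁻¹ • x, by simpa using hx, (norm_smul_inv_norm hx₀).le, ?_⟩
    rw [smul_inv_smul₀ (by exact_mod_cast norm_ne_zero_iff.2 hx₀)]

namespace AnalyticChain

variable {x y z : X}

lemma length_nonneg (c : AnalyticChain x y) : 0 ≤ c.length :=
  Finset.sum_nonneg fun i _ =>
    poincareDist_nonneg (mem_ball_zero_iff.1 (c.z_mem i)) (mem_ball_zero_iff.1 (c.w_mem i))

noncomputable def single (f : ℂ → X) (hf : DifferentiableOn ℂ f (ball 0 1))
    (hmaps : MapsTo f (ball 0 1) (ball 0 1)) {a b : ℂ} (ha : a ∈ ball (0 : ℂ) 1)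
    (hb : b ∈ ball (0 : ℂ) 1) (hx : f a = x) (hy : f b = y) : AnalyticChain x y where
  n := 0
  f _ := f
  z _ := a
  w _ := b
  holo _ := hf
  maps _ := hmaps
  z_mem _ := ha
  w_mem _ := hb
  first := hx
  last := hy
  link i := i.elim0

lemma length_single (f : ℂ → X) (hf : DifferentiableOn ℂ f (ball 0 1))
    (hmaps : MapsTo f (ball 0 1) (ball 0 1)) {a b : ℂ} (ha : a ∈ ball (0 : ℂ) 1)
    (hb : b ∈ ball (0 : ℂ) 1) (hx : f a = x) (hy : f b = y) :
    (single f hf hmaps ha hb hx hy).length = poincareDist a b :=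
  Fin.sum_univ_one _

noncomputable def append (c₁ : AnalyticChain x y) (c₂ : AnalyticChain y z) :
    AnalyticChain x z where
  -- `n + 1` unfolds to `(c₁.n + 1) + (c₂.n + 1)`, the index type of `Fin.append`
  n := c₁.n + 1 + c₂.n
  f := Fin.append (m := c₁.n + 1) (n := c₂.n + 1) c₁.f c₂.f
  z := Fin.append (m := c₁.n + 1) (n := c₂.n + 1) c₁.z c₂.z
  w := Fin.append (m := c₁.n + 1) (n := c₂.n + 1) c₁.w c₂.w
  holo := Fin.append_of_forall (p := fun g => DifferentiableOn ℂ g (ball 0 1)) c₁.holo c₂.holo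
  maps := Fin.append_of_forall (p := fun g : ℂ → X => ∀ c ∈ ball (0 : ℂ) 1, g c ∈ ball 0 1)
    c₁.maps c₂.maps
  z_mem := Fin.append_of_forall (p := (· ∈ ball (0 : ℂ) 1)) c₁.z_mem c₂.z_mem
  w_mem := Fin.append_of_forall (p := (· ∈ ball (0 : ℂ) 1)) c₁.w_mem c₂.w_mem
  first := by
    change Fin.append c₁.f c₂.f (Fin.castAdd (c₂.n + 1) 0)
      (Fin.append c₁.z c₂.z (Fin.castAdd (c₂.n + 1) 0)) = x
    simpa using c₁.first
  last := by
    change Fin.append c₁.f c₂.f (Fin.natAdd (c₁.n + 1) (Fin.last c₂.n))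
      (Fin.append c₁.w c₂.w (Fin.natAdd (c₁.n + 1) (Fin.last c₂.n))) = z
    rw [Fin.append_right, Fin.append_right]
    exact c₂.last
  link i := by
    induction i using Fin.addCases with
    | left j =>
      induction j using Fin.lastCases with
      | last =>
        have h : Fin.natAdd (c₁.n + 1) (0 : Fin (c₂.n + 1)) =
            (Fin.castAdd c₂.n (Fin.last c₁.n)).succ := Fin.ext (by simp)
        rw [← h]
        change Fin.append c₁.f c₂.f (Fin.castAdd (c₂.n + 1) (Fin.last c₁.n))
          (Fin.append c₁.w c₂.w (Fin.castAdd (c₂.n + 1) (Fin.last c₁.n))) = _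
        simp [c₁.last, c₂.first]
      | cast j =>
        have h : Fin.castAdd (c₂.n + 1) j.succ = (Fin.castAdd c₂.n j.castSucc).succ :=
          Fin.ext (by simp)
        rw [← h]
        change Fin.append c₁.f c₂.f (Fin.castAdd (c₂.n + 1) j.castSucc)
          (Fin.append c₁.w c₂.w (Fin.castAdd (c₂.n + 1) j.castSucc)) = _
        simpa using c₁.link j
    | right k =>
      change Fin.append c₁.f c₂.f (Fin.natAdd (c₁.n + 1) k.castSucc)
          (Fin.append c₁.w c₂.w (Fin.natAdd (c₁.n + 1) k.castSucc)) =
        Fin.append c₁.f c₂.f (Fin.natAdd (c₁.n + 1) k.succ)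
          (Fin.append c₁.z c₂.z (Fin.natAdd (c₁.n + 1) k.succ))
      simpa using c₂.link k

lemma length_append (c₁ : AnalyticChain x y) (c₂ : AnalyticChain y z) :
    (c₁.append c₂).length = c₁.length + c₂.length :=
  (Fin.sum_univ_add fun i => poincareDist (Fin.append c₁.z c₂.z i) (Fin.append c₁.w c₂.w i)).trans
    (by simp [length])

noncomputable def reverse (c : AnalyticChain x y) : AnalyticChain y x where
  n := c.n
  f i := c.f i.rev
  z i := c.w i.rev
  w i := c.z i.rev
  holo i := c.holo i.rev
  maps i := c.maps i.rev
  z_mem i := c.w_mem i.rev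
  w_mem i := c.z_mem i.rev
  first := by simpa using c.last
  last := by simpa using c.first
  link i := by simpa [Fin.rev_castSucc, Fin.rev_succ] using (c.link i.rev).symm

lemma length_reverse (c : AnalyticChain x y) : c.reverse.length = c.length :=
  (Equiv.sum_comp Fin.revPerm _).trans <| Fintype.sum_congr _ _ fun _ => poincareDist_comm _ _

/-- Two complex lines through `0`, one through each endpoint. -/
lemma nonempty_of_norm_lt_one (hx : ‖x‖ < 1) (hy : ‖y‖ < 1) : Nonempty (AnalyticChain x y) := by
  obtain ⟨a, v, ha, hv, rfl⟩ := exists_smul_eq_of_norm_lt_one hx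
  obtain ⟨b, u, hb, hu, rfl⟩ := exists_smul_eq_of_norm_lt_one hy
  have h0 : (0 : ℂ) ∈ ball (0 : ℂ) 1 := mem_ball_self one_pos
  exact ⟨(single _ (differentiable_id.smul_const v).differentiableOn (mapsTo_smul_ball hv) ha h0
    rfl (zero_smul ℂ v)).append
    (single _ (differentiable_id.smul_const u).differentiableOn (mapsTo_smul_ball hu) h0 hb
    (zero_smul ℂ u) rfl)⟩

lemma norm_sub_le_four_mul_length (c : AnalyticChain x y) : ‖x - y‖ ≤ 4 * c.length := by
  have htelescope : ∑ i, (c.f i (c.z i) - c.f i (c.w i)) = x - y := by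
    rw [Fin.sum_sub_eq_sub_of_succ _ _ c.link, c.first, c.last]
  rw [← htelescope, length, Finset.mul_sum]
  refine (norm_sum_le _ _).trans (Finset.sum_le_sum fun i _ => ?_)
  exact norm_sub_le_four_mul_poincareDist (c.holo i) (c.maps i)
    (mem_ball_zero_iff.1 (c.z_mem i)) (mem_ball_zero_iff.1 (c.w_mem i))

end AnalyticChain

section Kobayashi

variable {x y z : X}

lemma bddBelow_range_length (x y : X) :
    BddBelow (Set.range fun c : AnalyticChain x y => c.length) :=
  ⟨0, by rintro _ ⟨c, rfl⟩; exact c.length_nonneg⟩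

lemma kobayashiDist_nonneg (x y : X) : 0 ≤ kobayashiDist x y :=
  Real.sInf_nonneg (by rintro _ ⟨c, rfl⟩; exact c.length_nonneg)

lemma kobayashiDist_le_length (c : AnalyticChain x y) : kobayashiDist x y ≤ c.length :=
  csInf_le (bddBelow_range_length x y) ⟨c, rfl⟩

lemma kobayashiDist_comm (x y : X) : kobayashiDist x y = kobayashiDist y x := by
  have h : ∀ {x y : X}, (Set.range fun c : AnalyticChain x y => c.length) ⊆
      Set.range fun c : AnalyticChain y x => c.length := by
    rintro x y _ ⟨c, rfl⟩
    exact ⟨c.reverse, c.length_reverse⟩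
  rw [kobayashiDist, kobayashiDist, h.antisymm h]

lemma kobayashiDist_triangle (hx : ‖x‖ < 1) (hy : ‖y‖ < 1) (hz : ‖z‖ < 1) :
    kobayashiDist x z ≤ kobayashiDist x y + kobayashiDist y z := by
  have := AnalyticChain.nonempty_of_norm_lt_one hx hy
  have := AnalyticChain.nonempty_of_norm_lt_one hy hz
  exact le_ciInf_add_ciInf fun c₁ c₂ =>
    (kobayashiDist_le_length (c₁.append c₂)).trans_eq (c₁.length_append c₂)

lemma norm_sub_le_four_mul_kobayashiDist (hx : ‖x‖ < 1) (hy : ‖y‖ < 1) :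
    ‖x - y‖ ≤ 4 * kobayashiDist x y := by
  have := AnalyticChain.nonempty_of_norm_lt_one hx hy
  rw [← div_le_iff₀' four_pos]
  exact le_ciInf fun c => (div_le_iff₀' four_pos).2 c.norm_sub_le_four_mul_length

lemma kobayashiDist_eq_zero_iff (hx : ‖x‖ < 1) (hy : ‖y‖ < 1) :
    kobayashiDist x y = 0 ↔ x = y := by
  refine ⟨fun h => ?_, ?_⟩
  · have := norm_sub_le_four_mul_kobayashiDist hx hy
    rw [h, mul_zero] at this
    exact sub_eq_zero.1 (norm_le_zero_iff.1 this)
  · rintro rfl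
    have h0 : (0 : ℂ) ∈ ball (0 : ℂ) 1 := mem_ball_self one_pos
    have hconst : MapsTo (fun _ : ℂ => x) (ball 0 1) (ball 0 1) :=
      fun _ _ => mem_ball_zero_iff.2 hx
    refine le_antisymm ?_ (kobayashiDist_nonneg x x)
    refine (kobayashiDist_le_length (AnalyticChain.single _ (differentiableOn_const x) hconst
      h0 h0 rfl rfl)).trans_eq ?_
    rw [AnalyticChain.length_single, poincareDist_self]

end Kobayashi

lemma LinearPMap.IsClosed.exists_clm_of_domain_eq_top {𝕜 E F : Type*} [NontriviallyNormedField 𝕜]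
    [NormedAddCommGroup E] [NormedSpace 𝕜 E] [CompleteSpace E] [NormedAddCommGroup F]
    [NormedSpace 𝕜 F] [CompleteSpace F] {f : E →ₗ.[𝕜] F} (hf : f.IsClosed)
    (htop : f.domain = ⊤) : ∃ g : E →L[𝕜] F, ∀ x : f.domain, g x = f x := by
  set g : E →ₗ[𝕜] F := f.toFun ∘ₗ (LinearEquiv.ofTop _ htop).symm.toLinearMap
  have hgraph : (g.graph : Set (E × F)) = f.graph := by
    ext ⟨a, b⟩
    simp only [SetLike.mem_coe, LinearMap.mem_graph_iff, LinearPMap.mem_graph_iff]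
    exact ⟨fun h => ⟨_, rfl, h.symm⟩, fun ⟨_, ha, hb⟩ => by subst ha; exact hb.symm⟩
  exact ⟨.ofIsClosedGraph (show _root_.IsClosed (g.graph : Set (E × F)) from hgraph ▸ hf),
    fun x => rfl⟩

section Hat

open scoped InnerProduct

variable {H K : Type*} [NormedAddCommGroup H] [InnerProductSpace ℂ H] [CompleteSpace H]
  [NormedAddCommGroup K] [InnerProductSpace ℂ K]

lemma IsHat.norm_lt_one {T : H →ₗ.[ℂ] K} {A : K →L[ℂ] H} (h : IsHat T A) : ‖A‖ < 1 := by
  obtain ⟨-, -, -, -, -, -, -, -, hA, -⟩ := h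
  exact hA

variable [CompleteSpace K]

lemma IsHat.exists_clm {T : H →ₗ.[ℂ] K} {A : K →L[ℂ] H} (hT : Dense (T.domain : Set H))
    (h : IsHat T A) :
    ∃ (t : K →L[ℂ] H) (R : H →L[ℂ] H), T.domain = ⊤ ∧ (∀ x : T.domain, T x = (t†) x) ∧
      R.IsPositive ∧ A = R ∘L t ∧ R * R * (1 + t ∘L t†) = 1 ∧ (1 + t ∘L t†) * (R * R) = 1 := by
  obtain ⟨B, R, -, hBinv, hBsurj, hR, rfl, hdom, -, hA⟩ := h
  obtain ⟨t, ht⟩ := (T.adjoint_isClosed hT).exists_clm_of_domain_eq_top hdom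
  have hmem : ∀ y, y ∈ T.adjoint.domain := fun y => hdom ▸ Submodule.mem_top
  have htadj : ∀ x : T.domain, (t†) x = T x := fun x => ext_inner_right ℂ fun y => by
    rw [ContinuousLinearMap.adjoint_inner_left, ← inner_conj_symm, ← inner_conj_symm (T x),
      ← T.adjoint_isFormalAdjoint hT ⟨y, hmem y⟩ x, ← ht ⟨y, hmem y⟩]
  set C := 1 + t ∘L t†
  have hCB : ∀ y, C ((R * R) y) = y ∧ (R * R) y ∈ T.domain := by
    intro y
    obtain ⟨p, rfl⟩ := hBsurj y
    rw [hBinv p]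
    refine ⟨?_, p.1.2⟩
    simp [C, htadj, ← ht]
  have hCB₁ : C * (R * R) = 1 := ContinuousLinearMap.ext fun y => (hCB y).1
  have hBC₁ : R * R * C = 1 := by
    have hC : IsSelfAdjoint C := .add (.one _) (t.isPositive_self_comp_adjoint.isSelfAdjoint)
    simpa [hC.star_eq, hR.isSelfAdjoint.star_eq, mul_assoc] using congr_arg star hCB₁
  refine ⟨t, R, eq_top_iff.2 fun y _ => ?_, fun x => (htadj x).symm, hR,
    ContinuousLinearMap.ext fun y => (hA y (hmem y)).trans (congr_arg R (ht ⟨y, hmem y⟩).symm),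
    hBC₁, hCB₁⟩
  have hy : (R * R) (C y) = y := ContinuousLinearMap.ext_iff.1 hBC₁ y
  exact hy ▸ (hCB (C y)).2

lemma sq_eq_one_sub_comp_adjoint {R : H →L[ℂ] H} {t : K →L[ℂ] H} (hR : IsSelfAdjoint R)
    (h₁ : R * R * (1 + t ∘L t†) = 1) (h₂ : (1 + t ∘L t†) * (R * R) = 1) :
    R * R = 1 - (R ∘L t) ∘L (R ∘L t)† := by
  set C := 1 + t ∘L t†
  have hcomm : R * C = C * R := by
    calc R * C = C * (R * R) * R * C := by rw [h₂, one_mul]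
      _ = C * R * (R * R * C) := by simp only [mul_assoc]
      _ = C * R := by rw [h₁, mul_one]
  have hAA : (R ∘L t) ∘L (R ∘L t)† = R * (C - 1) * R := by
    rw [ContinuousLinearMap.adjoint_comp, hR.adjoint_eq, add_sub_cancel_left]
    rfl
  rw [hAA, mul_sub, mul_one, sub_mul, hcomm, mul_assoc, h₂]
  abel

lemma IsHat.unique {T S : H →ₗ.[ℂ] K} {A : K →L[ℂ] H}
    (hT : Dense (T.domain : Set H)) (hS : Dense (S.domain : Set H)) (hTA : IsHat T A)
    (hSA : IsHat S A) : T = S := by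
  obtain ⟨t₁, R₁, hdom₁, hT₁, hR₁, hA₁, hRC₁, hCR₁⟩ := hTA.exists_clm hT
  obtain ⟨t₂, R₂, hdom₂, hS₂, hR₂, hA₂, hRC₂, hCR₂⟩ := hSA.exists_clm hS
  have hsq : R₁ * R₁ = R₂ * R₂ := by
    rw [sq_eq_one_sub_comp_adjoint hR₁.isSelfAdjoint hRC₁ hCR₁, ← hA₁,
      sq_eq_one_sub_comp_adjoint hR₂.isSelfAdjoint hRC₂ hCR₂, ← hA₂]
  obtain rfl : R₁ = R₂ :=
    (CFC.sqrt_unique hsq ((ContinuousLinearMap.nonneg_iff_isPositive _).2 hR₁)).symm.trans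
      (CFC.sqrt_unique rfl ((ContinuousLinearMap.nonneg_iff_isPositive _).2 hR₂))
  have hleft : ∀ w, (1 + t₁ ∘L t₁†) (R₁ (R₁ w)) = w := ContinuousLinearMap.ext_iff.1 hCR₁
  have hinj : Function.Injective R₁ := fun u v huv => by rw [← hleft u, ← hleft v, huv]
  obtain rfl : t₁ = t₂ := ContinuousLinearMap.ext fun y => hinj <| by
    rw [← ContinuousLinearMap.comp_apply, ← hA₁, hA₂, ContinuousLinearMap.comp_apply]
  exact LinearPMap.ext (hdom₁.trans hdom₂.symm) fun x _ _ => by rw [hT₁, hS₂]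

end Hat

theorem hatKobayashi_is_metric_general
    {H K : Type*} [NormedAddCommGroup H] [InnerProductSpace ℂ H] [CompleteSpace H]
    [NormedAddCommGroup K] [InnerProductSpace ℂ K] [CompleteSpace K]
    (hat : ClosedDenseOp H K → (K →L[ℂ] H))
    (hhat : ∀ T : ClosedDenseOp H K, IsHat T.1 (hat T)) :
    (∀ T S : ClosedDenseOp H K, 0 ≤ kobayashiDist (hat T) (hat S)) ∧
    (∀ T S : ClosedDenseOp H K, kobayashiDist (hat T) (hat S) = 0 ↔ T = S) ∧
    (∀ T S : ClosedDenseOp H K, kobayashiDist (hat T) (hat S) = kobayashiDist (hat S) (hat T)) ∧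
    (∀ T S U : ClosedDenseOp H K,
      kobayashiDist (hat T) (hat U) ≤
        kobayashiDist (hat T) (hat S) + kobayashiDist (hat S) (hat U)) := by
  have hball : ∀ T, ‖hat T‖ < 1 := fun T => (hhat T).norm_lt_one
  refine ⟨fun T S => kobayashiDist_nonneg _ _, fun T S => ?_, fun T S => kobayashiDist_comm _ _,
    fun T S U => kobayashiDist_triangle (hball T) (hball S) (hball U)⟩
  rw [kobayashiDist_eq_zero_iff (hball T) (hball S)]
  exact ⟨fun h => Subtype.ext ((hhat T).unique T.2.1 S.2.1 (h ▸ hhat S)), congr_arg hat⟩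

/-- Let `K` be finite dimensional and, for `T ∈ C(H,K)`, let
`hat T = Ṫ = (I + T*T)^{-1/2} T*` be its image in the open unit ball of `L(K,H)`.
Then `d(T,S) := K_B(Ṫ, Ṡ)` (the Kobayashi distance of the hats) defines a metric on
`C(H,K)`: it is nonnegative, vanishes exactly on the diagonal, is symmetric, and
satisfies the triangle inequality. -/
theorem hatKobayashi_is_metric
    {H K : Type*} [NormedAddCommGroup H] [InnerProductSpace ℂ H] [CompleteSpace H]
    [NormedAddCommGroup K] [InnerProductSpace ℂ K] [CompleteSpace K]
    [FiniteDimensional ℂ K]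
    (hat : ClosedDenseOp H K → (K →L[ℂ] H))
    (hhat : ∀ T : ClosedDenseOp H K, IsHat T.1 (hat T)) :
    (∀ T S : ClosedDenseOp H K, 0 ≤ kobayashiDist (hat T) (hat S)) ∧
    (∀ T S : ClosedDenseOp H K, kobayashiDist (hat T) (hat S) = 0 ↔ T = S) ∧
    (∀ T S : ClosedDenseOp H K, kobayashiDist (hat T) (hat S) = kobayashiDist (hat S) (hat T)) ∧
    (∀ T S U : ClosedDenseOp H K,
      kobayashiDist (hat T) (hat U) ≤
        kobayashiDist (hat T) (hat S) + kobayashiDist (hat S) (hat U)) :=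
  hatKobayashi_is_metric_general hat hhat
end

section
/- For a positive bounded operator P on a finite-dimensional Hilbert space with ‖P‖ < 1, one has ‖2P(I + P²)^{-1}‖ = 2‖P‖/(1 + ‖P‖²), and consequently tanh^{-1}(‖2P(I+P²)^{-1}‖) = 2 tanh^{-1}(‖P‖). -/
lemma artanh_two_mul_div_one_add_sq {t : ℝ} (ht : t ≠ 1) :
    artanh (2 * t / (1 + t ^ 2)) = 2 * artanh t := by
  have hsq : (1 : ℝ) + t ^ 2 ≠ 0 := by positivity
  have hsub : (1 : ℝ) - t ≠ 0 := sub_ne_zero.mpr ht.symm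
  have hplus : 1 + 2 * t / (1 + t ^ 2) = (1 + t) ^ 2 / (1 + t ^ 2) := by
    field_simp
    ring
  have hminus : 1 - 2 * t / (1 + t ^ 2) = (1 - t) ^ 2 / (1 + t ^ 2) := by
    field_simp
    ring
  have key : (1 + 2 * t / (1 + t ^ 2)) / (1 - 2 * t / (1 + t ^ 2)) = ((1 + t) / (1 - t)) ^ 2 := by
    rw [hplus, hminus]
    field_simp
  rw [artanh, artanh, key, Real.log_pow]
  push_cast
  ring

lemma continuous_div_one_add_sq : Continuous fun x : ℝ => x / (1 + x ^ 2) :=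
  continuous_id.div (by fun_prop) fun x => by positivity

lemma monotoneOn_div_one_add_sq : MonotoneOn (fun x : ℝ => x / (1 + x ^ 2)) (Set.Icc (-1) 1) := by
  rintro x ⟨hx₁, hx₂⟩ y ⟨hy₁, hy₂⟩ hxy
  rw [div_le_div_iff₀ (by positivity) (by positivity)]
  have hxy_le_one : x * y ≤ 1 := by nlinarith
  nlinarith [mul_nonneg (sub_nonneg.mpr hxy) (sub_nonneg.mpr hxy_le_one)]

section

variable {A : Type*} [Ring A] [StarRing A] [Algebra ℝ A] [TopologicalSpace A]
  [ContinuousFunctionalCalculus ℝ A IsSelfAdjoint]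

lemma cfc_div_one_add_sq_mul {a : A} (ha : IsSelfAdjoint a) :
    cfc (fun x : ℝ => x / (1 + x ^ 2)) a * (1 + a ^ 2) = a := by
  have hsq : cfc (fun x : ℝ => 1 + x ^ 2) a = 1 + a ^ 2 := by
    rw [cfc_add .., cfc_const_one ℝ a, cfc_pow_id a 2 ha]
  rw [← hsq, ← cfc_mul _ _ a continuous_div_one_add_sq.continuousOn]
  conv_rhs => rw [← cfc_id' ℝ a]
  refine cfc_congr fun x _ => ?_
  field_simp

end

section

variable {A : Type*} [CStarAlgebra A] [PartialOrder A] [StarOrderedRing A]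

lemma isGreatest_spectrum_norm [Nontrivial A] {a : A} (ha : 0 ≤ a) :
    IsGreatest (spectrum ℝ a) ‖a‖ :=
  ⟨CStarAlgebra.norm_mem_spectrum_of_nonneg ha,
    fun _ hx => (Real.le_norm_self _).trans (spectrum.norm_le_norm_of_mem hx)⟩

lemma MonotoneOn.norm_cfc_of_nonneg [Nontrivial A] {f : ℝ → ℝ} {a : A} (ha : 0 ≤ a)
    (hf : MonotoneOn f (Set.Icc 0 ‖a‖)) (hf_cont : ContinuousOn f (Set.Icc 0 ‖a‖))
    (hf₀ : 0 ≤ f 0) : ‖cfc f a‖ = f ‖a‖ := by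
  have hσ : spectrum ℝ a ⊆ Set.Icc 0 ‖a‖ := fun x hx =>
    ⟨spectrum_nonneg_of_nonneg ha hx, (isGreatest_spectrum_norm ha).2 hx⟩
  have himage : (fun x => ‖f x‖) '' spectrum ℝ a = f '' spectrum ℝ a := by
    refine Set.image_congr fun x hx => Real.norm_of_nonneg ?_
    exact hf₀.trans (hf ⟨le_rfl, norm_nonneg a⟩ (hσ hx) (hσ hx).1)
  have hgreatest := IsGreatest.norm_cfc f a (hf_cont.mono hσ) ha.isSelfAdjoint
  rw [himage] at hgreatest
  exact hgreatest.unique ((hf.mono hσ).map_isGreatest (isGreatest_spectrum_norm ha))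

end

theorem norm_two_mul_cayley_eq_general
    {K : Type*} [NormedAddCommGroup K] [InnerProductSpace ℂ K] [CompleteSpace K]
    (P : K →L[ℂ] K) (hP : P.IsPositive) (hPnorm : ‖P‖ < 1)
    (B : K →L[ℂ] K)
    (hB₁ : ((1 : K →L[ℂ] K) + P * P) * B = 1) :
    ‖(2 : ℂ) • (P * B)‖ = 2 * ‖P‖ / (1 + ‖P‖ ^ 2) ∧
    artanh ‖(2 : ℂ) • (P * B)‖ = 2 * artanh ‖P‖ := by
  have hP₀ : 0 ≤ P := (P.nonneg_iff_isPositive).mpr hP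
  have hPB : P * B = cfc (fun x : ℝ => x / (1 + x ^ 2)) P := by
    conv_lhs => rw [← cfc_div_one_add_sq_mul hP₀.isSelfAdjoint]
    rw [mul_assoc, sq, hB₁, mul_one]
  have hnorm : ‖P * B‖ = ‖P‖ / (1 + ‖P‖ ^ 2) := by
    rcases subsingleton_or_nontrivial (K →L[ℂ] K) with _ | _
    · simp [Subsingleton.elim P 0]
    rw [hPB]
    exact MonotoneOn.norm_cfc_of_nonneg hP₀
      (monotoneOn_div_one_add_sq.mono (Set.Icc_subset_Icc (by norm_num) hPnorm.le))
      continuous_div_one_add_sq.continuousOn (by norm_num)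
  have hnorm₂ : ‖(2 : ℂ) • (P * B)‖ = 2 * ‖P‖ / (1 + ‖P‖ ^ 2) := by
    rw [norm_smul, hnorm, mul_div_assoc]
    norm_num
  exact ⟨hnorm₂, hnorm₂ ▸ artanh_two_mul_div_one_add_sq hPnorm.ne⟩

/-- For a positive bounded operator `P` on a finite-dimensional complex
Hilbert space `K` with `‖P‖ < 1` and with `B = (I + P²)⁻¹`, one has
`‖2P(I + P²)⁻¹‖ = 2‖P‖/(1 + ‖P‖²)`, and consequently
`tanh⁻¹ ‖2P(I + P²)⁻¹‖ = 2 tanh⁻¹ ‖P‖`. -/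
theorem norm_two_mul_cayley_eq
    {K : Type*} [NormedAddCommGroup K] [InnerProductSpace ℂ K] [CompleteSpace K]
    [FiniteDimensional ℂ K]
    (P : K →L[ℂ] K) (hP : P.IsPositive) (hPnorm : ‖P‖ < 1)
    (B : K →L[ℂ] K)
    (hB₁ : ((1 : K →L[ℂ] K) + P * P) * B = 1)
    (hB₂ : B * ((1 : K →L[ℂ] K) + P * P) = 1) :
    ‖(2 : ℂ) • (P * B)‖ = 2 * ‖P‖ / (1 + ‖P‖ ^ 2) ∧
    artanh ‖(2 : ℂ) • (P * B)‖ = 2 * artanh ‖P‖ :=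
  norm_two_mul_cayley_eq_general P hP hPnorm B hB₁
end
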